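/- arXiv:chao-dyn/9607016 — 7 statements merged into one kernel-verified Lean document; each statement's English description precedes it below -/
import Mathlib

section
/- Let u : ℝ → ℝ be continuously differentiable on [0,1] with u(0) = 0 and u(1) = 0. Then ∫₀¹ u(x)² dx ≤ ∫₀¹ u'(x)² dx (Poincaré inequality on the unit interval with constant 1). -/
/-- Poincaré inequality on the unit interval with constant 1:
if `u` is continuously differentiable on `[0,1]` with `u 0 = 0` and `u 1 = 0`,
then `∫₀¹ u² ≤ ∫₀¹ u'²`. -/
theorem poincare_unit_interval (u u' : ℝ → ℝ)
    (hderiv : ∀ x ∈ Set.Icc (0:ℝ) 1, HasDerivWithinAt u (u' x) (Set.Icc (0:ℝ) 1) x)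
    (hcont : ContinuousOn u' (Set.Icc (0:ℝ) 1))
    (h0 : u 0 = 0) (h1 : u 1 = 0) :
    ∫ x in (0:ℝ)..1, (u x) ^ 2 ≤ ∫ x in (0:ℝ)..1, (u' x) ^ 2 := by
  have hucont : ContinuousOn u (Set.Icc (0:ℝ) 1) :=
    fun x hx => (hderiv x hx).continuousWithinAt
  -- integrability of u'^2 on subintervals
  have hsq : ContinuousOn (fun t => (u' t) ^ 2) (Set.Icc (0:ℝ) 1) := hcont.pow 2
  have hi2 : ∀ a b : ℝ, 0 ≤ a → a ≤ b → b ≤ 1 →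
      IntervalIntegrable (fun t => (u' t) ^ 2) MeasureTheory.volume a b := by
    intro a b ha hab hb1
    apply ContinuousOn.intervalIntegrable
    rw [Set.uIcc_of_le hab]
    exact hsq.mono (Set.Icc_subset_Icc ha hb1)
  have hi1 : ∀ a b : ℝ, 0 ≤ a → a ≤ b → b ≤ 1 →
      IntervalIntegrable u' MeasureTheory.volume a b := by
    intro a b ha hab hb1
    apply ContinuousOn.intervalIntegrable
    rw [Set.uIcc_of_le hab]
    exact hcont.mono (Set.Icc_subset_Icc ha hb1)
  -- FTC
  have ftc : ∀ x ∈ Set.Icc (0:ℝ) 1, ∫ t in (0:ℝ)..x, u' t = u x := by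
    intro x hx
    have h := intervalIntegral.integral_eq_sub_of_hasDeriv_right_of_le hx.1
      (hucont.mono (Set.Icc_subset_Icc le_rfl hx.2))
      (fun t ht => by
        have ht1 : t ∈ Set.Icc (0:ℝ) 1 := ⟨ht.1.le, (lt_of_lt_of_le ht.2 hx.2).le⟩
        exact ((hderiv t ht1).hasDerivAt
          (Icc_mem_nhds ht.1 (lt_of_lt_of_le ht.2 hx.2))).hasDerivWithinAt)
      (hi1 0 x le_rfl hx.1 hx.2)
    rw [h, h0, sub_zero]
  set C : ℝ := ∫ t in (0:ℝ)..1, (u' t) ^ 2 with hC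
  have hCnonneg : 0 ≤ C :=
    intervalIntegral.integral_nonneg zero_le_one (fun t _ => sq_nonneg _)
  -- pointwise bound
  have key : ∀ x ∈ Set.Icc (0:ℝ) 1, (u x) ^ 2 ≤ C := by
    intro x hx
    rcases eq_or_lt_of_le hx.1 with hx0 | hx0
    · rw [← hx0, h0]; simpa using hCnonneg
    -- Cauchy-Schwarz expansion
    have hnn : (0:ℝ) ≤ ∫ t in (0:ℝ)..x, (x * u' t - u x) ^ 2 :=
      intervalIntegral.integral_nonneg hx.1 (fun t _ => sq_nonneg _)
    have hintA : IntervalIntegrable (fun t => x ^ 2 * (u' t) ^ 2)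
        MeasureTheory.volume 0 x := (hi2 0 x le_rfl hx.1 hx.2).const_mul _
    have hintB : IntervalIntegrable (fun t => (2 * x * u x) * u' t)
        MeasureTheory.volume 0 x := (hi1 0 x le_rfl hx.1 hx.2).const_mul _
    have hexp : ∫ t in (0:ℝ)..x, (x * u' t - u x) ^ 2
        = x ^ 2 * (∫ t in (0:ℝ)..x, (u' t) ^ 2)
          - (2 * x * u x) * (∫ t in (0:ℝ)..x, u' t) + (u x) ^ 2 * x := by
      have hcongr : ∀ t ∈ Set.uIcc (0:ℝ) x, (x * u' t - u x) ^ 2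
          = (x ^ 2 * (u' t) ^ 2 - (2 * x * u x) * u' t) + (u x) ^ 2 :=
        fun t _ => by ring
      rw [intervalIntegral.integral_congr hcongr,
        intervalIntegral.integral_add (hintA.sub hintB)
          intervalIntegrable_const,
        intervalIntegral.integral_sub hintA hintB,
        intervalIntegral.integral_const_mul, intervalIntegral.integral_const_mul,
        intervalIntegral.integral_const]
      simp [smul_eq_mul]
      ring
    rw [ftc x hx] at hexp
    have hI2x : (0:ℝ) ≤ ∫ t in (0:ℝ)..x, (u' t) ^ 2 :=
      intervalIntegral.integral_nonneg hx.1 (fun t _ => sq_nonneg _)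
    have hsplit : (∫ t in (0:ℝ)..x, (u' t) ^ 2) + (∫ t in x..(1:ℝ), (u' t) ^ 2) = C :=
      intervalIntegral.integral_add_adjacent_intervals
        (hi2 0 x le_rfl hx.1 hx.2) (hi2 x 1 hx.1 hx.2 le_rfl)
    have hI2x1 : (0:ℝ) ≤ ∫ t in x..(1:ℝ), (u' t) ^ 2 :=
      intervalIntegral.integral_nonneg hx.2 (fun t _ => sq_nonneg _)
    have h1' : u x ^ 2 ≤ x * ∫ t in (0:ℝ)..x, (u' t) ^ 2 :=
      le_of_mul_le_mul_left (by nlinarith) hx0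
    nlinarith [mul_nonneg (sub_nonneg.2 hx.2) hI2x]
  -- integrate the pointwise bound
  have hintu2 : IntervalIntegrable (fun t => (u t) ^ 2) MeasureTheory.volume 0 1 := by
    apply ContinuousOn.intervalIntegrable
    rw [Set.uIcc_of_le zero_le_one]
    exact hucont.pow 2
  calc ∫ x in (0:ℝ)..1, (u x) ^ 2
      ≤ ∫ _x in (0:ℝ)..1, C :=
        intervalIntegral.integral_mono_on zero_le_one hintu2
          intervalIntegrable_const (fun x hx => key x hx)
    _ = C := by simp
end

section
/- Let u : ℝ → ℝ be continuously differentiable on [0,1] with u(0) = 0 and u(1) = 0. Then (sup_{x ∈ [0,1]} |u(x)|)² ≤ 2 (∫₀¹ u(x)² dx)^{1/2} (∫₀¹ u'(x)² dx)^{1/2} (Agmon inequality). -/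
/-!
Since `u 0 = 0`, the fundamental theorem of calculus gives
`u x ^ 2 = ∫₀ˣ 2 u u' ≤ 2 ∫₀¹ |u| |u'|` for every `x ∈ [0,1]`,
and the Cauchy–Schwarz inequality bounds the last integral by `√(∫₀¹ u²) √(∫₀¹ u'²)`.
-/

open MeasureTheory Set

section CauchySchwarz

variable {α : Type*} [MeasurableSpace α] {μ : Measure α} {f g : α → ℝ}

theorem sq_integral_mul_le_integral_sq_mul_integral_sq
    (hf : Integrable (fun x ↦ f x ^ 2) μ) (hg : Integrable (fun x ↦ g x ^ 2) μ)
    (hfg : Integrable (fun x ↦ f x * g x) μ) :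
    (∫ x, f x * g x ∂μ) ^ 2 ≤ (∫ x, f x ^ 2 ∂μ) * ∫ x, g x ^ 2 ∂μ := by
  -- `t ↦ ∫ (f - t g)²` is a nonnegative quadratic, so its discriminant is nonpositive.
  have hquad : ∀ t : ℝ, 0 ≤ (∫ x, g x ^ 2 ∂μ) * (t * t) + (-2 * ∫ x, f x * g x ∂μ) * t
      + ∫ x, f x ^ 2 ∂μ := by
    intro t
    have hexpand : ∫ x, (f x - t * g x) ^ 2 ∂μ = (∫ x, g x ^ 2 ∂μ) * (t * t)
        + (-2 * ∫ x, f x * g x ∂μ) * t + ∫ x, f x ^ 2 ∂μ := by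
      have hpoint : (fun x ↦ (f x - t * g x) ^ 2)
          = fun x ↦ f x ^ 2 - (2 * t) * (f x * g x) + (t * t) * g x ^ 2 := by
        funext x; ring
      have hfirst : Integrable (fun x ↦ f x ^ 2 - (2 * t) * (f x * g x)) μ :=
        hf.sub (hfg.const_mul _)
      rw [hpoint, integral_add hfirst (hg.const_mul _),
        integral_sub hf (hfg.const_mul _), integral_const_mul, integral_const_mul]
      ring
    exact hexpand ▸ integral_nonneg fun x ↦ sq_nonneg _
  have hdisc := discrim_le_zero hquad
  rw [discrim] at hdisc
  linarith

theorem integral_mul_le_sqrt_integral_sq_mul_sqrt_integral_sq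
    (hf : Integrable (fun x ↦ f x ^ 2) μ) (hg : Integrable (fun x ↦ g x ^ 2) μ)
    (hfg : Integrable (fun x ↦ f x * g x) μ) :
    ∫ x, f x * g x ∂μ ≤ √(∫ x, f x ^ 2 ∂μ) * √(∫ x, g x ^ 2 ∂μ) := by
  rw [← Real.sqrt_mul (integral_nonneg fun x ↦ sq_nonneg _)]
  exact (le_abs_self _).trans
    (Real.abs_le_sqrt (sq_integral_mul_le_integral_sq_mul_integral_sq hf hg hfg))

end CauchySchwarz

theorem intervalIntegral.integral_abs_mul_abs_le_sqrt_integral_sq_mul_sqrt_integral_sq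
    {f g : ℝ → ℝ} {a b : ℝ} (hab : a ≤ b)
    (hf : ContinuousOn f (Icc a b)) (hg : ContinuousOn g (Icc a b)) :
    ∫ x in a..b, |f x| * |g x| ≤ √(∫ x in a..b, f x ^ 2) * √(∫ x in a..b, g x ^ 2) := by
  have integrableOn {h : ℝ → ℝ} (hh : ContinuousOn h (Icc a b)) : IntegrableOn h (Ioc a b) :=
    (intervalIntegrable_iff_integrableOn_Ioc_of_le hab).1 (hh.intervalIntegrable_of_Icc hab)
  simp only [intervalIntegral.integral_of_le hab, ← sq_abs (f _), ← sq_abs (g _)]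
  exact integral_mul_le_sqrt_integral_sq_mul_sqrt_integral_sq
    (integrableOn (hf.abs.pow 2)) (integrableOn (hg.abs.pow 2)) (integrableOn (hf.abs.mul hg.abs))

section FundamentalTheorem

variable {u u' : ℝ → ℝ} {a b : ℝ}

theorem integral_two_mul_mul_deriv_eq_sq_sub_sq (hab : a ≤ b)
    (hderiv : ∀ x ∈ Icc a b, HasDerivWithinAt u (u' x) (Icc a b) x)
    (hcont : ContinuousOn u' (Icc a b)) :
    ∫ x in a..b, 2 * u x * u' x = u b ^ 2 - u a ^ 2 := by
  have hu : ContinuousOn u (Icc a b) := fun x hx ↦ (hderiv x hx).continuousWithinAt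
  refine intervalIntegral.integral_eq_sub_of_hasDeriv_right_of_le hab (hu.pow 2) (fun x hx ↦ ?_)
    ((continuousOn_const.mul hu).mul hcont |>.intervalIntegrable_of_Icc hab)
  have hsq : HasDerivWithinAt (fun y ↦ u y ^ 2) (2 * u x * u' x) (Icc a b) x := by
    simpa using (hderiv x (Ioo_subset_Icc_self hx)).fun_pow 2
  exact hsq.mono_of_mem_nhdsWithin (Icc_mem_nhdsGT_of_mem (Ioo_subset_Ico_self hx))

theorem sq_le_two_mul_integral_abs_mul_abs_deriv
    (hderiv : ∀ x ∈ Icc a b, HasDerivWithinAt u (u' x) (Icc a b) x)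
    (hcont : ContinuousOn u' (Icc a b)) (ha : u a = 0) {x : ℝ} (hx : x ∈ Icc a b) :
    u x ^ 2 ≤ 2 * ∫ t in a..b, |u t| * |u' t| := by
  have hsub : Icc a x ⊆ Icc a b := Icc_subset_Icc_right hx.2
  have hu : ContinuousOn u (Icc a b) := fun t ht ↦ (hderiv t ht).continuousWithinAt
  have hprod : ContinuousOn (fun t ↦ 2 * (|u t| * |u' t|)) (Icc a b) :=
    continuousOn_const.mul (hu.abs.mul hcont.abs)
  have hftc : u x ^ 2 = ∫ t in a..x, 2 * u t * u' t := by
    rw [integral_two_mul_mul_deriv_eq_sq_sub_sq hx.1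
      (fun t ht ↦ (hderiv t (hsub ht)).mono hsub) (hcont.mono hsub), ha]
    ring
  calc u x ^ 2 = ∫ t in a..x, 2 * u t * u' t := hftc
    _ ≤ ∫ t in a..x, 2 * (|u t| * |u' t|) := by
      refine intervalIntegral.integral_mono_on hx.1
        (((continuousOn_const.mul hu).mul hcont).mono hsub |>.intervalIntegrable_of_Icc hx.1)
        ((hprod.mono hsub).intervalIntegrable_of_Icc hx.1) fun t _ ↦ ?_
      rw [mul_assoc, ← abs_mul]
      exact mul_le_mul_of_nonneg_left (le_abs_self _) zero_le_two
    _ ≤ ∫ t in a..b, 2 * (|u t| * |u' t|) :=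
      intervalIntegral.integral_mono_interval le_rfl hx.1 hx.2
        (Filter.Eventually.of_forall fun t ↦ by positivity)
        (hprod.intervalIntegrable_of_Icc (hx.1.trans hx.2))
    _ = 2 * ∫ t in a..b, |u t| * |u' t| := intervalIntegral.integral_const_mul _ _

end FundamentalTheorem

theorem sq_biSup_abs_le {α : Type*} {s : Set α} {f : α → ℝ} {c : ℝ} (hc : 0 ≤ c)
    (h : ∀ x ∈ s, f x ^ 2 ≤ c) : (⨆ x ∈ s, |f x|) ^ 2 ≤ c := by
  have hsup : (⨆ x ∈ s, |f x|) ≤ √c :=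
    Real.iSup_le (fun x ↦ Real.iSup_le (fun hx ↦ Real.abs_le_sqrt (h x hx)) (Real.sqrt_nonneg _))
      (Real.sqrt_nonneg _)
  exact (Real.le_sqrt (Real.iSup_nonneg fun x ↦ Real.iSup_nonneg fun _ ↦ abs_nonneg _) hc).1 hsup

theorem agmon_unit_interval_general (u u' : ℝ → ℝ)
    (hderiv : ∀ x ∈ Set.Icc (0:ℝ) 1, HasDerivWithinAt u (u' x) (Set.Icc (0:ℝ) 1) x)
    (hcont : ContinuousOn u' (Set.Icc (0:ℝ) 1))
    (h0 : u 0 = 0) :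
    (⨆ x ∈ Set.Icc (0:ℝ) 1, |u x|) ^ 2 ≤
      2 * Real.sqrt (∫ x in (0:ℝ)..1, (u x) ^ 2) *
        Real.sqrt (∫ x in (0:ℝ)..1, (u' x) ^ 2) := by
  have hu : ContinuousOn u (Icc 0 1) := fun x hx ↦ (hderiv x hx).continuousWithinAt
  refine sq_biSup_abs_le (by positivity) fun x hx ↦ ?_
  calc u x ^ 2 ≤ 2 * ∫ t in (0:ℝ)..1, |u t| * |u' t| :=
        sq_le_two_mul_integral_abs_mul_abs_deriv hderiv hcont h0 hx
    _ ≤ 2 * (√(∫ t in (0:ℝ)..1, u t ^ 2) * √(∫ t in (0:ℝ)..1, u' t ^ 2)) := by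
        gcongr
        exact intervalIntegral.integral_abs_mul_abs_le_sqrt_integral_sq_mul_sqrt_integral_sq
          zero_le_one hu hcont
    _ = _ := by ring

/-- Agmon inequality on the unit interval:
if `u` is continuously differentiable on `[0,1]` with `u 0 = 0` and `u 1 = 0`,
then `(sup_{x ∈ [0,1]} |u x|)² ≤ 2 √(∫₀¹ u²) √(∫₀¹ u'²)`. -/
theorem agmon_unit_interval (u u' : ℝ → ℝ)
    (hderiv : ∀ x ∈ Set.Icc (0:ℝ) 1, HasDerivWithinAt u (u' x) (Set.Icc (0:ℝ) 1) x)
    (hcont : ContinuousOn u' (Set.Icc (0:ℝ) 1))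
    (h0 : u 0 = 0) (h1 : u 1 = 0) :
    (⨆ x ∈ Set.Icc (0:ℝ) 1, |u x|) ^ 2 ≤
      2 * Real.sqrt (∫ x in (0:ℝ)..1, (u x) ^ 2) *
        Real.sqrt (∫ x in (0:ℝ)..1, (u' x) ^ 2) :=
  agmon_unit_interval_general u u' hderiv hcont h0
end

section
/- Let u : ℝ → ℝ be twice continuously differentiable on [0,1] with u(0) = 0 and u(1) = 0. Then ∫₀¹ u'(x)² dx ≤ ∫₀¹ u''(x)² dx. -/
open Set intervalIntegral MeasureTheory

/-- Cauchy–Schwarz for interval integrals of a continuous function against 1. -/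
lemma cs_aux {f : ℝ → ℝ} {a b : ℝ} (hab : a ≤ b) (hf : ContinuousOn f (Set.Icc a b)) :
    (∫ x in a..b, f x) ^ 2 ≤ (b - a) * ∫ x in a..b, f x ^ 2 := by
  rcases eq_or_lt_of_le hab with rfl | hlt
  · simp
  · set m : ℝ := b - a with hm
    have hm0 : 0 < m := by simp only [hm]; linarith
    set I : ℝ := ∫ x in a..b, f x with hI
    set lam : ℝ := I / m with hlam
    have hf' : ContinuousOn f (Set.uIcc a b) := by rwa [uIcc_of_le hab]
    have hfi : IntervalIntegrable f volume a b := hf'.intervalIntegrable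
    have hfi2 : IntervalIntegrable (fun x => f x ^ 2) volume a b :=
      (hf'.pow 2).intervalIntegrable
    have key : 0 ≤ ∫ x in a..b, (f x - lam) ^ 2 := by
      apply intervalIntegral.integral_nonneg hab
      intro x _; positivity
    have expand : ∫ x in a..b, (f x - lam) ^ 2
        = (∫ x in a..b, f x ^ 2) - 2 * lam * I + lam ^ 2 * m := by
      have : ∀ x, (f x - lam) ^ 2 = f x ^ 2 - 2 * lam * f x + lam ^ 2 := by
        intro x; ring
      simp_rw [this]
      rw [intervalIntegral.integral_add (hfi2.sub ((hfi.const_mul _)))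
        intervalIntegrable_const, intervalIntegral.integral_sub hfi2 (hfi.const_mul _),
        intervalIntegral.integral_const_mul, intervalIntegral.integral_const]
      rw [← hI, ← hm]
      simp only [smul_eq_mul]
      ring
    rw [expand] at key
    have hlm : lam ^ 2 * m = I ^ 2 / m := by
      rw [hlam]; field_simp
    rw [hlm, hlam] at key
    have h1 : I ^ 2 / m ≤ ∫ x in a..b, f x ^ 2 := by
      have h2 : 2 * (I / m) * I = 2 * (I ^ 2 / m) := by field_simp
      rw [h2] at key
      linarith
    calc I ^ 2 = (I ^ 2 / m) * m := by field_simp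
    _ ≤ (∫ x in a..b, f x ^ 2) * m := mul_le_mul_of_nonneg_right h1 hm0.le
    _ = m * ∫ x in a..b, f x ^ 2 := by ring

/-- If `u` is twice continuously differentiable on `[0,1]` with `u 0 = 0` and `u 1 = 0`,
then `∫₀¹ u'² ≤ ∫₀¹ u''²`. -/
theorem poincare_deriv_unit_interval (u u' u'' : ℝ → ℝ)
    (hderiv : ∀ x ∈ Set.Icc (0:ℝ) 1, HasDerivWithinAt u (u' x) (Set.Icc (0:ℝ) 1) x)
    (hderiv' : ∀ x ∈ Set.Icc (0:ℝ) 1, HasDerivWithinAt u' (u'' x) (Set.Icc (0:ℝ) 1) x)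
    (hcont : ContinuousOn u'' (Set.Icc (0:ℝ) 1))
    (h0 : u 0 = 0) (h1 : u 1 = 0) :
    ∫ x in (0:ℝ)..1, (u' x) ^ 2 ≤ ∫ x in (0:ℝ)..1, (u'' x) ^ 2 := by
  have hucont : ContinuousOn u (Icc 0 1) := fun x hx => (hderiv x hx).continuousWithinAt
  have hu'cont : ContinuousOn u' (Icc 0 1) := fun x hx => (hderiv' x hx).continuousWithinAt
  have hintK : IntervalIntegrable (fun x => u'' x ^ 2) volume 0 1 :=
    ((hcont.pow 2).mono (by rw [uIcc_of_le zero_le_one])).intervalIntegrable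
  have hKnonneg : (0:ℝ) ≤ ∫ t in (0:ℝ)..1, u'' t ^ 2 :=
    intervalIntegral.integral_nonneg zero_le_one (fun x _ => sq_nonneg _)
  -- Rolle: there is c ∈ (0,1) with u' c = 0
  obtain ⟨c, hc, hc0⟩ : ∃ c ∈ Ioo (0:ℝ) 1, u' c = 0 := by
    apply exists_hasDerivAt_eq_zero one_pos hucont (by rw [h0, h1])
    intro x hx
    exact (hderiv x (Ioo_subset_Icc_self hx)).hasDerivAt (Icc_mem_nhds hx.1 hx.2)
  have hcmem : c ∈ Icc (0:ℝ) 1 := Ioo_subset_Icc_self hc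
  -- FTC: for x ∈ [0,1], u' x = ∫ c..x u''
  have ftc : ∀ x ∈ Icc (0:ℝ) 1, u' x = ∫ t in c..x, u'' t := by
    intro x hx
    have huIcc : uIcc c x ⊆ Icc (0:ℝ) 1 := uIcc_subset_Icc hcmem hx
    have h := intervalIntegral.integral_eq_sub_of_hasDeriv_right (f := u') (f' := u'')
      (a := c) (b := x) (hu'cont.mono huIcc)
      (fun t ht => by
        have ht' : t ∈ Icc (0:ℝ) 1 := huIcc (Ioo_subset_Icc_self ht)
        have htlt : t < 1 := ht.2.trans_le (max_le hcmem.2 hx.2)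
        refine (hderiv' t ht').mono_of_mem_nhdsWithin ?_
        rw [mem_nhdsWithin]
        exact ⟨Iio 1, isOpen_Iio, htlt, fun y hy => ⟨ht'.1.trans hy.2.le, hy.1.le⟩⟩)
      ((hcont.mono huIcc).intervalIntegrable)
    rw [h, hc0, sub_zero]
  -- pointwise bound
  have pointwise : ∀ x ∈ Icc (0:ℝ) 1, (u' x) ^ 2 ≤ ∫ t in (0:ℝ)..1, u'' t ^ 2 := by
    intro x hx
    rw [ftc x hx]
    rcases le_total c x with hcx | hxc
    · have hsub : Icc c x ⊆ Icc (0:ℝ) 1 := Icc_subset_Icc hcmem.1 hx.2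
      calc (∫ t in c..x, u'' t) ^ 2 ≤ (x - c) * ∫ t in c..x, u'' t ^ 2 :=
            cs_aux hcx (hcont.mono hsub)
      _ ≤ 1 * ∫ t in (0:ℝ)..1, u'' t ^ 2 := by
          apply mul_le_mul (by linarith [hcmem.1, hx.2])
            (intervalIntegral.integral_mono_interval hcmem.1 hcx hx.2
              (Filter.Eventually.of_forall fun t => sq_nonneg _) hintK)
            (intervalIntegral.integral_nonneg hcx fun t _ => sq_nonneg _) one_pos.le
      _ = ∫ t in (0:ℝ)..1, u'' t ^ 2 := one_mul _
    · have hsub : Icc x c ⊆ Icc (0:ℝ) 1 := Icc_subset_Icc hx.1 hcmem.2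
      rw [intervalIntegral.integral_symm, neg_sq]
      calc (∫ t in x..c, u'' t) ^ 2 ≤ (c - x) * ∫ t in x..c, u'' t ^ 2 :=
            cs_aux hxc (hcont.mono hsub)
      _ ≤ 1 * ∫ t in (0:ℝ)..1, u'' t ^ 2 := by
          apply mul_le_mul (by linarith [hx.1, hcmem.2])
            (intervalIntegral.integral_mono_interval hx.1 hxc hcmem.2
              (Filter.Eventually.of_forall fun t => sq_nonneg _) hintK)
            (intervalIntegral.integral_nonneg hxc fun t _ => sq_nonneg _) one_pos.le
      _ = ∫ t in (0:ℝ)..1, u'' t ^ 2 := one_mul _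
  -- integrate the pointwise bound
  calc ∫ x in (0:ℝ)..1, (u' x) ^ 2
      ≤ ∫ _x in (0:ℝ)..1, (∫ t in (0:ℝ)..1, u'' t ^ 2) := by
        apply intervalIntegral.integral_mono_on zero_le_one
          (((hu'cont.pow 2).mono (by rw [uIcc_of_le zero_le_one])).intervalIntegrable)
          intervalIntegrable_const pointwise
  _ = ∫ x in (0:ℝ)..1, (u'' x) ^ 2 := by
        rw [intervalIntegral.integral_const]; simp
end

section
/- Let w : ℝ × ℝ → ℝ be smooth (C^∞) on [0,∞) × [0,1] and satisfy the viscous Burgers equation ∂_t w(t,x) = ∂_{xx} w(t,x) − w(t,x) ∂_x w(t,x) for all t ≥ 0 and x ∈ [0,1], together with the Dirichlet boundary conditions w(t,0) = w(t,1) = 0 for all t ≥ 0. Then for every t ≥ 0, ∫₀¹ w(t,x)² dx ≤ e^{-2t} ∫₀¹ w(0,x)² dx. In particular every trajectory converges to the zero equilibrium exponentially fast in the L²(0,1)-norm. -/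
/-!
Energy method. Multiplying the equation by `w` and integrating by parts in `x`, the boundary
terms vanish and the convective term `w² ∂ₓw = ∂ₓ(w³/3)` integrates to zero, so
`d/dt ∫ w² = -2 ∫ (∂ₓw)²`. Since `w(t, 0) = 0`, writing `w(t, x) = ∫₀ˣ ∂ₓw` and applying
Cauchy–Schwarz gives the Poincaré inequality `∫₀¹ w² ≤ ∫₀¹ (∂ₓw)²`. Hence
`d/dt ∫ w² ≤ -2 ∫ w²`, and `e^{2t} ∫ w²` is nonincreasing.
-/

open Set MeasureTheory intervalIntegral Topology Filter Interval

section Interval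

variable {a b : ℝ}

theorem sq_intervalIntegral_le_mul_intervalIntegral_sq {f : ℝ → ℝ} (hab : a ≤ b)
    (hf : IntervalIntegrable f volume a b)
    (hf2 : IntervalIntegrable (fun x => f x ^ 2) volume a b) :
    (∫ x in a..b, f x) ^ 2 ≤ (b - a) * ∫ x in a..b, f x ^ 2 := by
  set I := ∫ x in a..b, f x
  set J := ∫ x in a..b, f x ^ 2
  have hexpand : ∫ x in a..b, ((b - a) * f x - I) ^ 2 = (b - a) * ((b - a) * J - I ^ 2) := by
    have hpoint : ∀ x, ((b - a) * f x - I) ^ 2 =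
        (b - a) ^ 2 * f x ^ 2 - (2 * (b - a) * I) * f x + I ^ 2 := fun x => by ring
    simp_rw [hpoint]
    rw [integral_add ((hf2.const_mul _).sub (hf.const_mul _)) intervalIntegrable_const,
      integral_sub (hf2.const_mul _) (hf.const_mul _), intervalIntegral.integral_const_mul,
      intervalIntegral.integral_const_mul, intervalIntegral.integral_const, smul_eq_mul]
    ring
  have hnonneg : 0 ≤ (b - a) * ((b - a) * J - I ^ 2) :=
    hexpand ▸ integral_nonneg hab fun _ _ => sq_nonneg _
  rcases hab.eq_or_lt with rfl | hlt
  · simp [I]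
  · nlinarith [(mul_nonneg_iff_of_pos_left (sub_pos.2 hlt)).1 hnonneg]

theorem intervalIntegral_sq_le_mul_intervalIntegral_sq_deriv {u u' : ℝ → ℝ} (hab : a ≤ b)
    (hu : ContinuousOn u (Icc a b)) (hu' : ContinuousOn u' (Icc a b))
    (hderiv : ∀ x ∈ Ioo a b, HasDerivAt u (u' x) x) (ha : u a = 0) :
    ∫ x in a..b, u x ^ 2 ≤ (b - a) ^ 2 * ∫ x in a..b, u' x ^ 2 := by
  have hint : IntervalIntegrable u' volume a b := hu'.intervalIntegrable_of_Icc hab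
  have hint2 : IntervalIntegrable (fun x => u' x ^ 2) volume a b :=
    (hu'.pow 2).intervalIntegrable_of_Icc hab
  have hpointwise : ∀ x ∈ Icc a b, u x ^ 2 ≤ (b - a) * ∫ y in a..b, u' y ^ 2 := by
    intro x hx
    have hsub : Icc a x ⊆ Icc a b := Icc_subset_Icc_right hx.2
    have hftc : ∫ y in a..x, u' y = u x := by
      rw [integral_eq_sub_of_hasDerivAt_of_le hx.1 (hu.mono hsub)
        (fun y hy => hderiv y ⟨hy.1, hy.2.trans_le hx.2⟩) (hint.mono_set ?_), ha, sub_zero]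
      rw [uIcc_of_le hx.1, uIcc_of_le hab]; exact hsub
    calc u x ^ 2 ≤ (x - a) * ∫ y in a..x, u' y ^ 2 := by
          rw [← hftc]
          exact sq_intervalIntegral_le_mul_intervalIntegral_sq hx.1
            ((hu'.mono hsub).intervalIntegrable_of_Icc hx.1)
            (((hu'.mono hsub).pow 2).intervalIntegrable_of_Icc hx.1)
      _ ≤ (b - a) * ∫ y in a..b, u' y ^ 2 := by
          refine mul_le_mul (by linarith [hx.2]) ?_ (integral_nonneg hx.1 fun _ _ => sq_nonneg _)
            (sub_nonneg.2 hab)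
          exact integral_mono_interval le_rfl hx.1 hx.2
            (Eventually.of_forall fun _ => sq_nonneg _) hint2
  calc ∫ x in a..b, u x ^ 2 ≤ ∫ _ in a..b, (b - a) * ∫ y in a..b, u' y ^ 2 :=
        integral_mono_on hab ((hu.pow 2).intervalIntegrable_of_Icc hab) intervalIntegrable_const
          hpointwise
    _ = (b - a) ^ 2 * ∫ x in a..b, u' x ^ 2 := by
          rw [intervalIntegral.integral_const, smul_eq_mul]; ring

theorem intervalIntegral_sq_mul_eq_of_hasDerivAt {u u' : ℝ → ℝ} (hab : a ≤ b)
    (hu : ContinuousOn u (Icc a b)) (hu' : ContinuousOn u' (Icc a b))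
    (hderiv : ∀ x ∈ Ioo a b, HasDerivAt u (u' x) x) :
    ∫ x in a..b, u x ^ 2 * u' x = (u b ^ 3 - u a ^ 3) / 3 := by
  have hcube : ∀ x ∈ Ioo a b, HasDerivAt (fun y => u y ^ 3 / 3) (u x ^ 2 * u' x) x := fun x hx =>
    (((hderiv x hx).pow 3).div_const 3).congr_deriv (by push_cast; ring)
  rw [integral_eq_sub_of_hasDerivAt_of_le hab ((hu.pow 3).div_const 3) hcube
    (((hu.pow 2).mul hu').intervalIntegrable_of_Icc hab)]
  simp only [Pi.pow_apply]
  ring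

theorem burgers_energy_identity {u u' u'' : ℝ → ℝ} (hab : a ≤ b)
    (hu : ContinuousOn u (Icc a b)) (hu' : ContinuousOn u' (Icc a b))
    (hu'' : ContinuousOn u'' (Icc a b))
    (hderiv : ∀ x ∈ Ioo a b, HasDerivAt u (u' x) x)
    (hderiv' : ∀ x ∈ Ioo a b, HasDerivAt u' (u'' x) x) (ha : u a = 0) (hb : u b = 0) :
    ∫ x in a..b, u x * (u'' x - u x * u' x) = -∫ x in a..b, u' x ^ 2 := by
  have hint : ∀ {f : ℝ → ℝ}, ContinuousOn f (Icc a b) → IntervalIntegrable f volume a b :=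
    fun hf => hf.intervalIntegrable_of_Icc hab
  have hibp : ∫ x in a..b, u x * u'' x = -∫ x in a..b, u' x ^ 2 := by
    rw [integral_mul_deriv_eq_deriv_mul_of_hasDerivAt (v := u') (by rwa [uIcc_of_le hab])
      (by rwa [uIcc_of_le hab]) (by simpa [hab] using hderiv) (by simpa [hab] using hderiv')
      (hint hu') (hint hu''), ha, hb]
    simp [sq]
  have hsplit : ∀ x, u x * (u'' x - u x * u' x) = u x * u'' x - u x ^ 2 * u' x :=
    fun x => by ring
  simp_rw [hsplit]
  rw [integral_sub (f := fun x => u x * u'' x) (g := fun x => u x ^ 2 * u' x)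
      (hint (hu.mul hu'')) (hint ((hu.pow 2).mul hu')), hibp,
    intervalIntegral_sq_mul_eq_of_hasDerivAt hab hu hu' hderiv, ha, hb]
  ring

theorem ContDiffOn.burgers_energy_le {u : ℝ → ℝ} (hab : a < b) (hu : ContDiffOn ℝ 2 u (Icc a b))
    (ha : u a = 0) (hb : u b = 0) :
    (b - a) ^ 2 * ∫ x in a..b, u x * (deriv (deriv u) x - u x * deriv u x) ≤
      -∫ x in a..b, u x ^ 2 := by
  have hIcc : UniqueDiffOn ℝ (Icc a b) := uniqueDiffOn_Icc hab
  set u' := derivWithin u (Icc a b)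
  set u'' := derivWithin u' (Icc a b)
  have hu' : ContDiffOn ℝ 1 u' (Icc a b) := hu.derivWithin hIcc (by norm_num)
  have hu'' : ContDiffOn ℝ 0 u'' (Icc a b) := hu'.derivWithin hIcc (by norm_num)
  have hasDerivAt_of_mem_Ioo : ∀ {f : ℝ → ℝ}, ContDiffOn ℝ 1 f (Icc a b) →
      ∀ x ∈ Ioo a b, HasDerivAt f (derivWithin f (Icc a b) x) x := fun hf x hx =>
    ((hf.differentiableOn one_ne_zero x (Ioo_subset_Icc_self hx)).hasDerivWithinAt).hasDerivAt
      (Icc_mem_nhds hx.1 hx.2)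
  have hderiv := hasDerivAt_of_mem_Ioo (hu.of_le (by norm_num))
  have hderiv' := hasDerivAt_of_mem_Ioo hu'
  have hderiv_eq : EqOn (fun x => u x * (deriv (deriv u) x - u x * deriv u x))
      (fun x => u x * (u'' x - u x * u' x)) (Ioo a b) := by
    intro x hx
    have hnear : deriv u =ᶠ[𝓝 x] u' := by
      filter_upwards [Ioo_mem_nhds hx.1 hx.2] with y hy using (hderiv y hy).deriv
    show u x * (deriv (deriv u) x - u x * deriv u x) = u x * (u'' x - u x * u' x)
    rw [hnear.deriv_eq, (hderiv x hx).deriv, (hderiv' x hx).deriv]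
  rw [integral_congr_Ioo_of_le hab.le hderiv_eq,
    burgers_energy_identity hab.le hu.continuousOn hu'.continuousOn hu''.continuousOn hderiv
      hderiv' ha hb]
  linarith [intervalIntegral_sq_le_mul_intervalIntegral_sq_deriv hab.le hu.continuousOn
    hu'.continuousOn hderiv ha]

end Interval

section ParametricIntegral

variable {E : Type*} [NormedAddCommGroup E] [NormedSpace ℝ E] {a b : ℝ}

theorem continuousOn_intervalIntegral_of_continuousOn_prod {X : Type*} [TopologicalSpace X]
    {f : X × ℝ → E} {s : Set X} (hab : a ≤ b) (hf : ContinuousOn f (s ×ˢ Icc a b)) :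
    ContinuousOn (fun t => ∫ x in a..b, f (t, x)) s := by
  rw [continuousOn_iff_continuous_domRestrict]
  -- clamping `x` into `[a, b]` does not change the integral and makes the integrand continuous
  set g : s → ℝ → E := fun t x => f (t, projIcc a b hab x)
  have hg : Continuous (Function.uncurry g) :=
    hf.comp_continuous (by fun_prop) fun p => ⟨p.1.2, (projIcc a b hab p.2).2⟩
  convert continuous_parametric_intervalIntegral_of_continuous' (μ := volume) hg a b using 2
    with t
  refine integral_congr fun x hx => ?_
  rw [uIcc_of_le hab] at hx
  simp [g, projIcc_of_mem hab hx]

theorem hasDerivAt_intervalIntegral_of_continuousOn_prod {f f' : ℝ × ℝ → E} {s : Set ℝ}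
    {t₀ : ℝ} (hab : a ≤ b) (hs : s ∈ 𝓝 t₀) (hf : ContinuousOn f (s ×ˢ Icc a b))
    (hf' : ContinuousOn f' (s ×ˢ Icc a b))
    (hderiv : ∀ t ∈ s, ∀ x ∈ Icc a b, HasDerivAt (fun τ => f (τ, x)) (f' (t, x)) t) :
    HasDerivAt (fun t => ∫ x in a..b, f (t, x)) (∫ x in a..b, f' (t₀, x)) t₀ := by
  obtain ⟨ε, hε, hball⟩ := Metric.nhds_basis_closedBall.mem_iff.1 hs
  have hK : Metric.closedBall t₀ ε ×ˢ Icc a b ⊆ s ×ˢ Icc a b := prod_mono hball le_rfl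
  obtain ⟨M, hM⟩ := ((isCompact_closedBall t₀ ε).prod isCompact_Icc).exists_bound_of_continuousOn
    (hf'.mono hK)
  have hslice : ∀ {g : ℝ × ℝ → E}, ContinuousOn g (s ×ˢ Icc a b) → ∀ t ∈ s,
      ContinuousOn (fun x => g (t, x)) (Icc a b) := fun hg t ht =>
    hg.comp (Continuous.continuousOn (by fun_prop)) fun x hx => ⟨ht, hx⟩
  have hmeas : ∀ {g : ℝ × ℝ → E}, ContinuousOn g (s ×ˢ Icc a b) → ∀ t ∈ s,
      AEStronglyMeasurable (fun x => g (t, x)) (volume.restrict (Ι a b)) := fun hg t ht => by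
    rw [uIoc_of_le hab]
    exact ((hslice hg t ht).mono Ioc_subset_Icc_self).aestronglyMeasurable measurableSet_Ioc
  refine (hasDerivAt_integral_of_dominated_loc_of_deriv_le
    (F := fun t x => f (t, x)) (F' := fun t x => f' (t, x)) (bound := fun _ => M)
    (Metric.closedBall_mem_nhds t₀ hε) (eventually_of_mem hs (hmeas hf))
    ((hslice hf t₀ (mem_of_mem_nhds hs)).intervalIntegrable_of_Icc hab)
    (hmeas hf' t₀ (mem_of_mem_nhds hs)) ?_ intervalIntegrable_const ?_).2
  · refine Eventually.of_forall fun x hx t ht => hM (t, x) ⟨ht, ?_⟩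
    exact Ioc_subset_Icc_self (uIoc_of_le hab ▸ hx)
  · refine Eventually.of_forall fun x hx t ht => hderiv t (hball ht) x ?_
    exact Ioc_subset_Icc_self (uIoc_of_le hab ▸ hx)

theorem hasDerivAt_of_differentiableWithinAt_prod {w : ℝ × ℝ → E} {s T : Set ℝ} {t x : ℝ}
    (hw : DifferentiableWithinAt ℝ w (s ×ˢ T) (t, x)) (hs : s ∈ 𝓝 t) (hx : x ∈ T) :
    HasDerivAt (fun τ => w (τ, x)) (fderivWithin ℝ w (s ×ˢ T) (t, x) (1, 0)) t := by
  have hline : HasDerivWithinAt (fun τ : ℝ => (τ, x)) ((1 : ℝ), (0 : ℝ)) s t :=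
    ((hasDerivAt_id t).prodMk (hasDerivAt_const t x)).hasDerivWithinAt
  exact (hw.hasFDerivWithinAt.comp_hasDerivWithinAt t hline
    fun _ hτ => mk_mem_prod hτ hx).hasDerivAt hs

theorem ContDiffOn.hasDerivAt_intervalIntegral_sq {w : ℝ × ℝ → ℝ} {s : Set ℝ} {t : ℝ}
    (hab : a < b) (hs : IsOpen s) (hw : ContDiffOn ℝ 1 w (s ×ˢ Icc a b)) (ht : t ∈ s) :
    HasDerivAt (fun τ => ∫ x in a..b, w (τ, x) ^ 2)
      (∫ x in a..b, 2 * w (t, x) * deriv (fun τ => w (τ, x)) t) t := by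
  have hS : UniqueDiffOn ℝ (s ×ˢ Icc a b) := hs.uniqueDiffOn.prod (uniqueDiffOn_Icc hab)
  set wₜ : ℝ × ℝ → ℝ := fun p => fderivWithin ℝ w (s ×ˢ Icc a b) p (1, 0)
  have hwₜ : ContinuousOn wₜ (s ×ˢ Icc a b) :=
    (hw.continuousOn_fderivWithin hS le_rfl).clm_apply
      (continuousOn_const (c := ((1 : ℝ), (0 : ℝ))))
  have hderiv : ∀ τ ∈ s, ∀ x ∈ Icc a b, HasDerivAt (fun σ => w (σ, x)) (wₜ (τ, x)) τ :=
    fun τ hτ x hx => hasDerivAt_of_differentiableWithinAt_prod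
      (hw.differentiableOn one_ne_zero _ ⟨hτ, hx⟩) (hs.mem_nhds hτ) hx
  refine (hasDerivAt_intervalIntegral_of_continuousOn_prod (f := fun p => w p ^ 2)
    (f' := fun p => 2 * w p * wₜ p) hab.le (hs.mem_nhds ht) (hw.continuousOn.pow 2)
    ((continuousOn_const.mul hw.continuousOn).mul hwₜ)
    fun τ hτ x hx => ((hderiv τ hτ x hx).pow 2).congr_deriv (by push_cast; ring)).congr_deriv
    (intervalIntegral.integral_congr fun x hx => ?_)
  rw [(hderiv t ht x (uIcc_of_le hab.le ▸ hx)).deriv]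

end ParametricIntegral

theorem le_exp_mul_of_hasDerivAt_le_mul {F F' : ℝ → ℝ} {c t₀ : ℝ} (hF : ContinuousOn F (Ici t₀))
    (hderiv : ∀ t > t₀, HasDerivAt F (F' t) t) (hle : ∀ t > t₀, F' t ≤ c * F t) :
    ∀ t ≥ t₀, F t ≤ Real.exp (c * (t - t₀)) * F t₀ := by
  set G : ℝ → ℝ := fun t => Real.exp (-c * t) * F t
  have hG : ∀ t > t₀, HasDerivAt G (Real.exp (-c * t) * (F' t - c * F t)) t := fun t ht =>
    (((hasDerivAt_id t).const_mul (-c)).exp.mul (hderiv t ht)).congr_deriv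
      (by simp only [id_eq, mul_one]; ring)
  have hanti : AntitoneOn G (Ici t₀) := by
    refine antitoneOn_of_deriv_nonpos (convex_Ici t₀)
      ((Continuous.continuousOn (by fun_prop)).mul hF) ?_ ?_ <;> rw [interior_Ici]
    · exact fun t ht => (hG t ht).differentiableAt.differentiableWithinAt
    · exact fun t ht => (hG t ht).deriv ▸
        mul_nonpos_of_nonneg_of_nonpos (Real.exp_pos _).le (sub_nonpos.2 (hle t ht))
  intro t ht
  have hGt : G t ≤ G t₀ := hanti self_mem_Ici ht ht
  calc F t = Real.exp (c * t) * G t := by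
        simp only [G, ← mul_assoc, ← Real.exp_add, neg_mul, add_neg_cancel, Real.exp_zero, one_mul]
    _ ≤ Real.exp (c * t) * G t₀ := by gcongr
    _ = Real.exp (c * (t - t₀)) * F t₀ := by
        simp only [G, ← mul_assoc, ← Real.exp_add]; ring_nf

/-- For a smooth solution `w` of the viscous Burgers equation on `[0,∞) × [0,1]`
with zero Dirichlet boundary conditions, the `L²(0,1)` energy decays exponentially:
`∫₀¹ w(t,x)² dx ≤ e^{-2t} ∫₀¹ w(0,x)² dx` for all `t ≥ 0`. -/
theorem burgers_exponential_decay (w : ℝ × ℝ → ℝ)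
    (hsmooth : ContDiffOn ℝ (⊤ : ℕ∞) w (Set.Ici (0:ℝ) ×ˢ Set.Icc (0:ℝ) 1))
    (heq : ∀ t ≥ (0:ℝ), ∀ x ∈ Set.Icc (0:ℝ) 1,
      deriv (fun s => w (s, x)) t =
        deriv (deriv (fun y => w (t, y))) x - w (t, x) * deriv (fun y => w (t, y)) x)
    (hbc0 : ∀ t ≥ (0:ℝ), w (t, 0) = 0)
    (hbc1 : ∀ t ≥ (0:ℝ), w (t, 1) = 0) :
    ∀ t ≥ (0:ℝ),
      ∫ x in (0:ℝ)..1, (w (t, x)) ^ 2 ≤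
        Real.exp (-2 * t) * ∫ x in (0:ℝ)..1, (w (0, x)) ^ 2 := by
  have hdissipation : ∀ t > 0, ∫ x in (0 : ℝ)..1, 2 * w (t, x) * deriv (fun s => w (s, x)) t ≤
      -2 * ∫ x in (0 : ℝ)..1, w (t, x) ^ 2 := by
    intro t ht
    have hslice : ContDiffOn ℝ 2 (fun y => w (t, y)) (Icc 0 1) :=
      (hsmooth.comp (by fun_prop : ContDiff ℝ _ fun y : ℝ => (t, y)).contDiffOn
        fun y hy => ⟨ht.le, hy⟩).of_le (WithTop.coe_le_coe.2 le_top)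
    have hpde := integral_congr (a := 0) (b := 1) (μ := volume) fun x hx =>
      congrArg (2 * w (t, x) * ·) (heq t ht.le x (uIcc_of_le (zero_le_one' ℝ) ▸ hx))
    have henergy := hslice.burgers_energy_le zero_lt_one (hbc0 t ht.le) (hbc1 t ht.le)
    rw [hpde]
    simp only [mul_assoc, intervalIntegral.integral_const_mul]
    simp only [sub_zero, one_pow, one_mul] at henergy
    linarith
  intro t ht
  simpa using le_exp_mul_of_hasDerivAt_le_mul
    (continuousOn_intervalIntegral_of_continuousOn_prod zero_le_one (hsmooth.continuousOn.pow 2))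
    (fun t ht => ((hsmooth.of_le (WithTop.coe_le_coe.2 le_top)).mono
      (prod_mono Ioi_subset_Ici_self le_rfl)).hasDerivAt_intervalIntegral_sq zero_lt_one
        isOpen_Ioi ht)
    hdissipation t ht
end

section
/- Let a, b be real numbers with |a| + |b| > 0, set c := 36000 (|a|+|b|)⁴, define f : ℝ → ℝ by f(J) = -J + 40 J² + c J³, and let J₊ := (-20 + √(400 + c)) / c be the unique positive zero of f. Suppose J : [0,∞) → ℝ is differentiable, J(t) ≥ 0 for all t ≥ 0, J'(t) ≤ f(J(t)) for all t ≥ 0, and J(0) < J₊. Then J(t) ≤ J(0) for all t ≥ 0 and J(t) → 0 as t → ∞. -/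
/-- Comparison principle: if `J` is a nonnegative differentiable function on `[0,∞)`
satisfying the differential inequality `J' ≤ f ∘ J` with
`f J = -J + 40J² + 36000(|a|+|b|)⁴ J³`, and `J 0 < J₊` (the unique positive zero of `f`),
then `J t ≤ J 0` for all `t ≥ 0` and `J t → 0` as `t → ∞`. -/
theorem comparison_ode_decay (a b : ℝ) (hab : 0 < |a| + |b|)
    (c : ℝ) (hc : c = 36000 * (|a| + |b|) ^ 4)
    (f : ℝ → ℝ) (hf : ∀ J, f J = -J + 40 * J ^ 2 + c * J ^ 3)
    (Jplus : ℝ) (hJplus : Jplus = (-20 + Real.sqrt (400 + c)) / c)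
    (J J' : ℝ → ℝ)
    (hderiv : ∀ t ≥ (0:ℝ), HasDerivWithinAt J (J' t) (Set.Ici (0:ℝ)) t)
    (hnonneg : ∀ t ≥ (0:ℝ), 0 ≤ J t)
    (hineq : ∀ t ≥ (0:ℝ), J' t ≤ f (J t))
    (h0 : J 0 < Jplus) :
    (∀ t ≥ (0:ℝ), J t ≤ J 0) ∧ Filter.Tendsto J Filter.atTop (nhds 0) := by
  have hc0 : 0 < c := by
    rw [hc]; positivity
  set s := Real.sqrt (400 + c) with hs
  have hs2 : s ^ 2 = 400 + c := Real.sq_sqrt (by linarith)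
  have hsnn : 0 ≤ s := Real.sqrt_nonneg _
  have hs20 : 20 < s := by nlinarith
  have hJp0 : 0 < Jplus := by
    rw [hJplus]; exact div_pos (by linarith) hc0
  have hroot : c * Jplus ^ 2 + 40 * Jplus - 1 = 0 := by
    rw [hJplus]
    field_simp
    nlinarith [hs2]
  -- the quadratic factor is negative below Jplus
  have hq : ∀ x : ℝ, 0 ≤ x → x < Jplus → c * x ^ 2 + 40 * x - 1 < 0 := by
    intro x hx hxJ
    have hfac : 0 < c * (x + Jplus) + 40 := by
      nlinarith [mul_nonneg hc0.le (add_nonneg hx hJp0.le)]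
    nlinarith [mul_pos (sub_pos.mpr hxJ) hfac]
  have hJ00 : 0 ≤ J 0 := hnonneg 0 le_rfl
  -- barrier argument: any K with J 0 ≤ K, 0 < K < Jplus, bounds J
  have key : ∀ K : ℝ, 0 < K → K < Jplus → J 0 ≤ K → ∀ t ≥ (0:ℝ), J t ≤ K := by
    intro K hK0 hKJ h0K t ht
    have hcont : ContinuousOn J (Set.Icc 0 t) := fun x hx =>
      ((hderiv x hx.1).continuousWithinAt).mono (fun y hy => hy.1)
    have hder : ∀ x ∈ Set.Ico (0:ℝ) t, HasDerivWithinAt J (J' x) (Set.Ici x) x := fun x hx =>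
      (hderiv x hx.1).mono (Set.Ici_subset_Ici.2 hx.1)
    have := image_le_of_deriv_right_lt_deriv_boundary (B := fun _ => K) (B' := fun _ => 0)
      hcont hder h0K (fun x => hasDerivAt_const x K) ?_ ⟨ht, le_refl t⟩
    · exact this
    · intro x hx hxK
      have h1 := hineq x hx.1
      rw [hf, hxK] at h1
      have h1' : J' x ≤ -K + 40 * K ^ 2 + c * K ^ 3 := h1
      have h2 := hq K hK0.le hKJ
      show J' x < 0
      nlinarith [mul_pos hK0 (show 0 < -(c * K ^ 2 + 40 * K - 1) by linarith)]
  -- part 1: J t ≤ J 0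
  have hle : ∀ t ≥ (0:ℝ), J t ≤ J 0 := by
    intro t ht
    by_contra hlt
    push_neg at hlt
    set K := min ((J 0 + J t) / 2) ((J 0 + Jplus) / 2) with hK
    have hK0 : 0 < K := by
      apply lt_min <;> linarith
    have hKJ : K < Jplus := lt_of_le_of_lt (min_le_right _ _) (by linarith)
    have h0K : J 0 ≤ K := le_min (by linarith) (by linarith)
    have := key K hK0 hKJ h0K t ht
    have := min_le_left ((J 0 + J t) / 2) ((J 0 + Jplus) / 2)
    linarith
  -- f (J t) ≤ 0 for all t ≥ 0
  have hfle : ∀ t ≥ (0:ℝ), f (J t) ≤ 0 := by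
    intro t ht
    have hx := hnonneg t ht
    have hxJ : J t < Jplus := lt_of_le_of_lt (hle t ht) h0
    have := hq (J t) hx hxJ
    rw [hf]
    nlinarith
  -- J is antitone on [0,∞)
  have hanti : AntitoneOn J (Set.Ici 0) := by
    apply antitoneOn_of_hasDerivWithinAt_nonpos (convex_Ici 0) (f' := J')
    · exact fun x hx => (hderiv x hx).continuousWithinAt
    · intro x hx
      rw [interior_Ici] at hx
      exact (hderiv x hx.le).mono (by rw [interior_Ici]; exact Set.Ioi_subset_Ici_self)
    · intro x hx
      rw [interior_Ici] at hx
      exact le_trans (hineq x hx.le) (hfle x hx.le)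
  -- J gets below any ε > 0
  have hsmall : ∀ ε > (0:ℝ), ∃ t ≥ (0:ℝ), J t < ε := by
    intro ε hε
    by_contra h
    push_neg at h
    have hεJ0 : ε ≤ J 0 := h 0 le_rfl
    have hqJ0 : c * J 0 ^ 2 + 40 * J 0 - 1 < 0 := hq _ hJ00 h0
    set δ := ε * (1 - 40 * J 0 - c * J 0 ^ 2) with hδ
    have hδ0 : 0 < δ := mul_pos hε (by linarith)
    have hbound : ∀ x : ℝ, ε ≤ x → x ≤ J 0 → f x ≤ -δ := by
      intro x h1 h2
      have hx0 : 0 ≤ x := le_trans hε.le h1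
      have hqx : c * x ^ 2 + 40 * x - 1 ≤ c * J 0 ^ 2 + 40 * J 0 - 1 := by
        have hfac : 0 ≤ c * (J 0 + x) + 40 := by nlinarith [mul_nonneg hc0.le (show (0:ℝ) ≤ J 0 + x by linarith)]
        nlinarith [mul_nonneg (sub_nonneg.2 h2) hfac]
      have e1 : x * ((c * x ^ 2 + 40 * x - 1) - (c * J 0 ^ 2 + 40 * J 0 - 1)) ≤ 0 :=
        mul_nonpos_of_nonneg_of_nonpos hx0 (by linarith)
      have e2 : (x - ε) * (c * J 0 ^ 2 + 40 * J 0 - 1) ≤ 0 :=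
        mul_nonpos_of_nonneg_of_nonpos (by linarith) hqJ0.le
      rw [hf, hδ]
      nlinarith
    -- g t = J t + δ t is antitone
    have hganti : AntitoneOn (fun t => J t + δ * t) (Set.Ici 0) := by
      apply antitoneOn_of_hasDerivWithinAt_nonpos (convex_Ici 0) (f' := fun t => J' t + δ)
      · exact fun x hx => ((hderiv x hx).continuousWithinAt).add
          ((continuous_const.mul continuous_id).continuousWithinAt)
      · intro x hx
        rw [interior_Ici] at hx ⊢
        exact ((hderiv x hx.le).mono Set.Ioi_subset_Ici_self).add
          (by simpa using (hasDerivWithinAt_id x (Set.Ioi 0)).const_mul δ)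
      · intro x hx
        rw [interior_Ici] at hx
        have := hbound (J x) (h x hx.le) (hle x hx.le)
        have := hineq x hx.le
        linarith
    set T := J 0 / δ + 1 with hT
    have hT0 : (0:ℝ) ≤ T := by positivity
    have hg := hganti Set.self_mem_Ici (Set.mem_Ici.2 hT0) hT0
    simp only [mul_zero, add_zero] at hg
    have hδT : δ * T = J 0 + δ := by
      rw [hT]; field_simp
    have hnn := hnonneg T hT0
    linarith
  refine ⟨hle, Metric.tendsto_atTop.2 ?_⟩
  intro ε hε
  obtain ⟨t0, ht0, hJt0⟩ := hsmall ε hε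
  refine ⟨t0, fun n hn => ?_⟩
  have hn0 : (0:ℝ) ≤ n := le_trans ht0 hn
  have := hanti (Set.mem_Ici.2 ht0) (Set.mem_Ici.2 hn0) hn
  rw [Real.dist_eq, sub_zero, abs_of_nonneg (hnonneg n hn0)]
  linarith
end

section
/- Let a, b be real numbers with |a| + |b| > 0, set c := 36000 (|a|+|b|)⁴, define f : ℝ → ℝ by f(J) = -J + 40 J² + c J³, and let J₊ := (-20 + √(400 + c)) / c be the unique positive zero of f. Suppose J : [0,T) → ℝ (with 0 < T ≤ ∞) is differentiable, satisfies J'(t) = f(J(t)) for all t ∈ [0,T), J(0) > J₊, and [0,T) is the maximal interval of existence of this solution. Then J is strictly increasing on [0,T) and sup_{t ∈ [0,T)} J(t) = ∞. -/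
/-!
`f` is positive to the right of its positive zero `J₊`, so a solution starting above `J₊` never
drops below its initial value and is therefore strictly increasing. If it were bounded, then either
`T = ∞` and `J' ≥ min f > 0` on the compact range forces linear growth, or `T < ∞` and, `f` being
locally Lipschitz, Picard–Lindelöf started close enough to `T` (with an existence time that is
uniform over the bounded range) continues the solution past `T`, contradicting maximality.
-/

open Set Metric Bornology
open scoped NNReal Topology

/-- `-x + 2bx² + cx³ = x (cx² + 2bx - 1)`, and the bound on `x` is the positive root of the
quadratic factor. -/
lemma cubic_pos_of_root_lt {b c x : ℝ} (hc : 0 < c) (hx : (-b + √(b ^ 2 + c)) / c < x) :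
    0 < -x + 2 * b * x ^ 2 + c * x ^ 3 := by
  set s := √(b ^ 2 + c)
  have hs2 : s ^ 2 = b ^ 2 + c := Real.sq_sqrt (by positivity)
  have hbs : |b| < s := by
    rw [← Real.sqrt_sq_eq_abs]
    exact Real.sqrt_lt_sqrt (sq_nonneg b) (by linarith)
  have hcx : s - b < c * x := by rwa [div_lt_iff₀' hc, add_comm, ← sub_eq_add_neg] at hx
  have hx0 : 0 < x := (div_pos (by linarith [le_abs_self b]) hc).trans hx
  have hquad : 0 < c * x ^ 2 + 2 * b * x - 1 := by
    have : s ^ 2 < (c * x + b) ^ 2 :=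
      pow_lt_pow_left₀ (by linarith) ((abs_nonneg b).trans hbs.le) two_ne_zero
    nlinarith
  nlinarith [mul_pos hx0 hquad]

section IntegralCurve

variable {E : Type*} [NormedAddCommGroup E] [NormedSpace ℝ E] {γ γ₁ γ₂ : ℝ → E} {v : ℝ → E → E}
  {g : E → E} {a b : ℝ}

lemma IsIntegralCurveOn.hasDerivWithinAt_Ici {s : Set ℝ} {t : ℝ} (hγ : IsIntegralCurveOn γ v s)
    (hs : s.OrdConnected) (ht : t ∈ s) (hb : b ∈ s) (htb : t < b) :
    HasDerivWithinAt γ (v t (γ t)) (Ici t) t :=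
  (hγ t ht).mono_of_mem_nhdsWithin (hs.mem_nhdsGE ht hb htb)

/-- The speed is `< L` inside the ball, so `‖γ t - γ a‖` can never catch up with `L (t - a)`. -/
lemma IsIntegralCurveOn.mapsTo_closedBall {R L : ℝ} (hγ : IsIntegralCurveOn γ (fun _ ↦ g) (Icc a b))
    (hL : 0 ≤ L) (hg : ∀ x ∈ closedBall (γ a) R, ‖g x‖ < L) (hLR : L * (b - a) ≤ R) :
    MapsTo γ (Icc a b) (closedBall (γ a) R) := by
  intro t ht
  have hdist := image_norm_le_of_norm_deriv_right_lt_deriv_boundary (f := fun t ↦ γ t - γ a)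
    (hγ.continuousOn.sub continuousOn_const)
    (fun x hx ↦ (hγ.hasDerivWithinAt_Ici ordConnected_Icc (Ico_subset_Icc_self hx)
      (right_mem_Icc.2 (hx.1.trans hx.2.le)) hx.2).sub_const (γ a))
    (B := fun t ↦ L * (t - a)) (by simp)
    (fun x ↦ ((hasDerivAt_id x).sub_const a).const_mul L |>.congr_deriv (mul_one L))
    (fun x hx hnorm ↦ hg _ <| by
      rw [mem_closedBall, dist_eq_norm, hnorm]
      exact (mul_le_mul_of_nonneg_left (by linarith [hx.2]) hL).trans hLR) ht
  rw [mem_closedBall, dist_eq_norm]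
  exact hdist.trans ((mul_le_mul_of_nonneg_left (by linarith [ht.2]) hL).trans hLR)

lemma IsIntegralCurveOn.eqOn_Ico {u : Set E} {K : ℝ≥0}
    (hv : ∀ t ∈ Ico a b, LipschitzOnWith K (v t) u)
    (h₁ : IsIntegralCurveOn γ₁ v (Ico a b)) (h₂ : IsIntegralCurveOn γ₂ v (Ico a b))
    (hu₁ : MapsTo γ₁ (Ico a b) u) (hu₂ : MapsTo γ₂ (Ico a b) u) (ha : γ₁ a = γ₂ a) :
    EqOn γ₁ γ₂ (Ico a b) := by
  intro t ht
  have hsub : Icc a t ⊆ Ico a b := Icc_subset_Ico_right ht.2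
  have hsub' : Ico a t ⊆ Ico a b := Ico_subset_Ico_right ht.2.le
  exact ODE_solution_unique_of_mem_Icc_right (s := fun _ ↦ u) (fun τ hτ ↦ hv τ (hsub' hτ))
    (h₁.continuousOn.mono hsub)
    (fun τ hτ ↦ h₁.hasDerivWithinAt_Ici ordConnected_Ico (hsub' hτ) ht hτ.2)
    (fun τ hτ ↦ hu₁ (hsub' hτ)) (h₂.continuousOn.mono hsub)
    (fun τ hτ ↦ h₂.hasDerivWithinAt_Ici ordConnected_Ico (hsub' hτ) ht hτ.2)
    (fun τ hτ ↦ hu₂ (hsub' hτ)) ha ⟨ht.1, le_rfl⟩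

lemma IsIntegralCurveOn.ite_Ico {c d : ℝ} (h₁ : IsIntegralCurveOn γ₁ v (Ico a b))
    (h₂ : IsIntegralCurveOn γ₂ v (Icc c d)) (hcb : c < b) (heq : EqOn γ₁ γ₂ (Ico c b)) :
    IsIntegralCurveOn (fun t ↦ if t < b then γ₁ t else γ₂ t) v (Ico a d) := by
  intro t ht
  dsimp only
  by_cases htb : t < b
  · have hU : Ico a d ∩ Iio b ∈ 𝓝[Ico a d] t := inter_mem_nhdsWithin _ (Iio_mem_nhds htb)
    rw [if_pos htb]
    refine (h₁ t ⟨ht.1, htb⟩).mono_of_mem_nhdsWithin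
      (Filter.mem_of_superset hU fun s hs ↦ ⟨hs.1.1, hs.2⟩) |>.congr_of_eventuallyEq ?_ (if_pos htb)
    filter_upwards [hU] with s hs using if_pos hs.2
  · have hct : c < t := hcb.trans_le (not_lt.1 htb)
    have hU : Ico a d ∩ Ioi c ∈ 𝓝[Ico a d] t := inter_mem_nhdsWithin _ (Ioi_mem_nhds hct)
    rw [if_neg htb]
    refine (h₂ t ⟨hct.le, ht.2.le⟩).mono_of_mem_nhdsWithin
      (Filter.mem_of_superset hU fun s hs ↦ ⟨hs.2.le, hs.1.2.le⟩)
      |>.congr_of_eventuallyEq ?_ (if_neg htb)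
    filter_upwards [hU] with s hs
    split_ifs with hsb
    exacts [heq ⟨hs.2.le, hsb⟩, rfl]


/-- The solution is restarted at `t₀ ≥ b - r / 2`, where `r = R / (C + 1)` is the existence time
that Picard–Lindelöf guarantees from every point of `u`. -/
theorem IsIntegralCurveOn.exists_extension_of_lipschitzOnWith [CompleteSpace E] {u : Set E}
    {R K C : ℝ≥0}
    (hab : a < b) (hR : 0 < R) (hγ : IsIntegralCurveOn γ (fun _ ↦ g) (Ico a b))
    (hγu : MapsTo γ (Ico a b) u) (hK : LipschitzOnWith K g (cthickening R u))
    (hC : ∀ x ∈ cthickening R u, ‖g x‖ ≤ C) :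
    ∃ b' > b, ∃ γ' : ℝ → E, IsIntegralCurveOn γ' (fun _ ↦ g) (Ico a b') ∧ EqOn γ' γ (Ico a b) := by
  set r : ℝ := R / (C + 1)
  have hr : 0 < r := by positivity
  have hCr : (C + 1) * r = R := mul_div_cancel₀ _ (by positivity)
  set t₀ := max a (b - r / 2)
  have ht₀ : t₀ ∈ Ico a b := ⟨le_max_left _ _, max_lt hab (by linarith)⟩
  have hball : closedBall (γ t₀) R ⊆ cthickening R u := closedBall_subset_cthickening (hγu ht₀) R
  have hpl : IsPicardLindelof (fun _ ↦ g) (tmin := t₀) (tmax := t₀ + r)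
      ⟨t₀, left_mem_Icc.2 (by linarith)⟩ (γ t₀) R 0 C K :=
    { lipschitzOnWith := fun _ _ ↦ hK.mono hball
      continuousOn := fun _ _ ↦ continuousOn_const
      norm_le := fun _ _ x hx ↦ hC x (hball hx)
      mul_max_le := by
        simp only [add_sub_cancel_left, sub_self, max_eq_left hr.le, NNReal.coe_zero, sub_zero]
        nlinarith }
  obtain ⟨σ, hσ₀, hσ⟩ := hpl.exists_eq_forall_mem_Icc_hasDerivWithinAt₀
  replace hσ₀ : σ t₀ = γ t₀ := hσ₀
  replace hσ : IsIntegralCurveOn σ (fun _ ↦ g) (Icc t₀ (t₀ + r)) := hσ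
  have hσball : MapsTo σ (Icc t₀ (t₀ + r)) (closedBall (γ t₀) R) := by
    rw [← hσ₀]
    refine IsIntegralCurveOn.mapsTo_closedBall (L := C + 1) hσ (by positivity) (fun x hx ↦ ?_)
      (by rw [add_sub_cancel_left, hCr])
    exact (hC x (hball (hσ₀ ▸ hx))).trans_lt (lt_add_one _)
  have hbr : b < t₀ + r := by linarith [le_max_right a (b - r / 2)]
  have hsub : Ico t₀ b ⊆ Icc t₀ (t₀ + r) := Ico_subset_Icc_self.trans (Icc_subset_Icc_right hbr.le)
  have hsub₀ : Ico t₀ b ⊆ Ico a b := Ico_subset_Ico_left ht₀.1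
  have heq : EqOn γ σ (Ico t₀ b) :=
    IsIntegralCurveOn.eqOn_Ico (fun _ _ ↦ hK) (hγ.mono hsub₀) (hσ.mono hsub)
      ((hγu.mono_left hsub₀).mono_right (self_subset_cthickening u))
      ((hσball.mono_left hsub).mono_right hball) hσ₀.symm
  exact ⟨t₀ + r, hbr, _, hγ.ite_Ico hσ ht₀.2 heq, fun t ht ↦ if_pos ht.2⟩

theorem IsIntegralCurveOn.exists_extension_of_isBounded [ProperSpace E]
    (hg : LocallyLipschitz g) (hab : a < b) (hγ : IsIntegralCurveOn γ (fun _ ↦ g) (Ico a b))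
    (hbdd : IsBounded (γ '' Ico a b)) :
    ∃ b' > b, ∃ γ' : ℝ → E, IsIntegralCurveOn γ' (fun _ ↦ g) (Ico a b') ∧ EqOn γ' γ (Ico a b) := by
  have hcpt : IsCompact (cthickening (1 : ℝ≥0) (γ '' Ico a b)) :=
    isCompact_of_isClosed_isBounded isClosed_cthickening hbdd.cthickening
  obtain ⟨K, hK⟩ := hg.locallyLipschitzOn.exists_lipschitzOnWith_of_compact hcpt
  obtain ⟨C, hC⟩ := hcpt.exists_bound_of_continuousOn hg.continuous.continuousOn
  exact hγ.exists_extension_of_lipschitzOnWith (C := C.toNNReal) hab one_pos (mapsTo_image _ _) hK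
    fun x hx ↦ (hC x hx).trans (Real.le_coe_toNNReal C)

end IntegralCurve

section Autonomous

variable {g γ : ℝ → ℝ} {s : Set ℝ} {a : ℝ}

lemma IsIntegralCurveOn.apply_le_apply_of_pos (hγ : IsIntegralCurveOn γ (fun _ ↦ g) s)
    (hs : s.OrdConnected) (ha : a ∈ s) (hpos : 0 < g (γ a)) {t : ℝ} (ht : t ∈ s) (hat : a ≤ t) :
    γ a ≤ γ t := by
  have hsub : Icc a t ⊆ s := hs.out ha ht
  have := image_le_of_deriv_right_lt_deriv_boundary (f := fun t ↦ -γ t)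
    (hγ.continuousOn.mono hsub).neg
    (fun x hx ↦ (hγ.hasDerivWithinAt_Ici hs (hsub (Ico_subset_Icc_self hx)) ht hx.2).neg)
    (B := fun _ ↦ -γ a) le_rfl (fun _ ↦ hasDerivAt_const _ _)
    (fun _ _ hx ↦ by rw [neg_inj.1 hx]; exact neg_lt_zero.2 hpos) ⟨hat, le_rfl⟩
  exact neg_le_neg_iff.1 this

lemma IsIntegralCurveOn.strictMonoOn_of_pos (hγ : IsIntegralCurveOn γ (fun _ ↦ g) s)
    (hs : s.OrdConnected) (ha : IsLeast s a) (hpos : ∀ x, γ a ≤ x → 0 < g x) :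
    StrictMonoOn γ s :=
  strictMonoOn_of_hasDerivWithinAt_pos hs.convex hγ.continuousOn
    (fun x hx ↦ (hγ x (interior_subset hx)).mono interior_subset) fun _ hx ↦
      hpos _ <| hγ.apply_le_apply_of_pos hs ha.1 (hpos _ le_rfl) (interior_subset hx)
        (ha.2 (interior_subset hx))

lemma IsIntegralCurveOn.not_bddAbove_image_Ici (hγ : IsIntegralCurveOn γ (fun _ ↦ g) (Ici a))
    (hg : ContinuousOn g (Ici (γ a))) (hpos : ∀ x, γ a ≤ x → 0 < g x) :
    ¬ BddAbove (γ '' Ici a) := by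
  rintro ⟨M, hM⟩
  have hle : ∀ t ∈ Ici a, γ t ≤ M := fun t ht ↦ hM (mem_image_of_mem γ ht)
  have hge : ∀ t ∈ Ici a, γ a ≤ γ t := fun t ht ↦
    hγ.apply_le_apply_of_pos ordConnected_Ici self_mem_Ici (hpos _ le_rfl) ht ht
  obtain ⟨x₀, hx₀, hmin⟩ := isCompact_Icc.exists_isMinOn (nonempty_Icc.2 (hle a self_mem_Ici))
    (hg.mono Icc_subset_Ici_self)
  have hε : 0 < g x₀ := hpos x₀ hx₀.1
  have hderiv : ∀ t ∈ interior (Ici a), HasDerivAt γ (g (γ t)) t := fun t ht ↦ by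
    rw [interior_Ici] at ht
    exact (hγ t (mem_Ici.2 ht.le)).hasDerivAt (Ici_mem_nhds ht)
  have hgrowth := (convex_Ici a).mul_sub_le_image_sub_of_le_deriv hγ.continuousOn
    (fun t ht ↦ (hderiv t ht).differentiableAt.differentiableWithinAt) (C := g x₀)
    (fun t ht ↦ (hderiv t ht).deriv ▸
      hmin ⟨hge t (interior_subset ht), hle t (interior_subset ht)⟩)
  set t := a + (M - γ a) / g x₀ + 1
  have ht : a ≤ t := by
    have := div_nonneg (sub_nonneg.2 (hle a self_mem_Ici)) hε.le
    linarith
  have hlin : g x₀ * (t - a) = M - γ a + g x₀ := by simp only [t]; field_simp; ring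
  linarith [hgrowth a self_mem_Ici t ht ht, hle t ht]

end Autonomous

lemma setOf_nonneg_and_coe_lt_coe (τ : ℝ) : {s : ℝ | 0 ≤ s ∧ (s : EReal) < τ} = Ico 0 τ := by
  ext; simp

/-- Blow-up for the comparison ODE: if `J` solves `J' = f(J)` on its maximal interval
of existence `[0,T)` (with `0 < T ≤ ∞`) and `J 0 > J₊` (the unique positive zero of
`f J = -J + 40J² + 36000(|a|+|b|)⁴ J³`), then `J` is strictly increasing on `[0,T)`
and `sup_{t ∈ [0,T)} J t = ∞`, i.e. `J` is unbounded above on `[0,T)`. -/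
theorem comparison_ode_blowup (a b : ℝ) (hab : 0 < |a| + |b|)
    (c : ℝ) (hc : c = 36000 * (|a| + |b|) ^ 4)
    (f : ℝ → ℝ) (hf : ∀ J, f J = -J + 40 * J ^ 2 + c * J ^ 3)
    (Jplus : ℝ) (hJplus : Jplus = (-20 + Real.sqrt (400 + c)) / c)
    (T : EReal) (hT : 0 < T)
    (J : ℝ → ℝ)
    (hode : ∀ t : ℝ, 0 ≤ t → (t : EReal) < T →
      HasDerivWithinAt J (f (J t)) {s : ℝ | 0 ≤ s ∧ (s : EReal) < T} t)
    (h0 : Jplus < J 0)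
    (hmax : ∀ T' : EReal, T < T' →
      ¬ ∃ K : ℝ → ℝ,
        (∀ t : ℝ, 0 ≤ t → (t : EReal) < T' →
          HasDerivWithinAt K (f (K t)) {s : ℝ | 0 ≤ s ∧ (s : EReal) < T'} t) ∧
        (∀ t : ℝ, 0 ≤ t → (t : EReal) < T → K t = J t)) :
    StrictMonoOn J {s : ℝ | 0 ≤ s ∧ (s : EReal) < T} ∧
      ¬ BddAbove (J '' {s : ℝ | 0 ≤ s ∧ (s : EReal) < T}) := by
  have hc0 : 0 < c := hc ▸ by positivity
  have hpos : ∀ x, J 0 ≤ x → 0 < f x := fun x hx ↦ by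
    have := cubic_pos_of_root_lt (b := 20) (x := x) hc0 (by norm_num [← hJplus]; linarith)
    norm_num at this
    rwa [hf]
  have hlip : LocallyLipschitz f :=
    (show ContDiff ℝ 1 f by rw [funext hf]; fun_prop).locallyLipschitz
  have hγ : IsIntegralCurveOn J (fun _ ↦ f) {s : ℝ | 0 ≤ s ∧ (s : EReal) < T} :=
    fun t ht ↦ hode t ht.1 ht.2
  have hmono := hγ.strictMonoOn_of_pos
    ⟨fun x hx y hy z hz ↦ ⟨hx.1.trans hz.1, (EReal.coe_le_coe_iff.2 hz.2).trans_lt hy.2⟩⟩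
    ⟨⟨le_rfl, hT⟩, fun t ht ↦ ht.1⟩ hpos
  refine ⟨hmono, ?_⟩
  induction T using EReal.rec with
  | bot => exact absurd hT not_lt_bot
  | top =>
    have hD : {s : ℝ | 0 ≤ s ∧ (s : EReal) < ⊤} = Ici 0 := by ext; simp [EReal.coe_lt_top]
    rw [hD] at hγ ⊢
    exact hγ.not_bddAbove_image_Ici hlip.continuous.continuousOn hpos
  | coe τ =>
    rw [setOf_nonneg_and_coe_lt_coe] at hγ hmono ⊢
    intro hbdd
    have hτ : 0 < τ := EReal.coe_pos.1 hT
    obtain ⟨τ', hτ', K, hK, hKJ⟩ := hγ.exists_extension_of_isBounded hlip hτ <|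
      BddBelow.isBounded ⟨J 0, by
        rintro _ ⟨t, ht, rfl⟩; exact hmono.monotoneOn ⟨le_rfl, hτ⟩ ht ht.1⟩ hbdd
    refine hmax τ' (EReal.coe_lt_coe_iff.2 hτ') ⟨K, fun t h0 ht ↦ ?_, fun t h0 ht ↦ ?_⟩
    · rw [setOf_nonneg_and_coe_lt_coe]
      exact hK t ⟨h0, EReal.coe_lt_coe_iff.1 ht⟩
    · exact hKJ ⟨h0, EReal.coe_lt_coe_iff.1 ht⟩
end

section
/- Let a, b be real numbers with |a| + |b| > 0, set c := 36000 (|a|+|b|)⁴ and J₊ := (-20 + √(400 + c)) / c (the unique positive zero of f(J) = -J + 40J² + cJ³). Let u, v : ℝ × ℝ → ℝ be smooth (C^∞) on [0,∞) × [0,1], satisfying the coupled Burgers' equations ∂_t u = ∂_{xx} u − u ∂_x u − a ∂_x(uv) and ∂_t v = ∂_{xx} v − v ∂_x v − b ∂_x(uv) for all t ≥ 0 and x ∈ [0,1], with Dirichlet boundary conditions u(t,0) = u(t,1) = v(t,0) = v(t,1) = 0 for all t ≥ 0. Define J(t) := ½(∫₀¹ (∂_x u(t,x))² dx + ∫₀¹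 (∂_x v(t,x))² dx) and assume J(0) < J₊. Then J(t) → 0 as t → ∞. -/
/-!
Write `A = ‖∂ₓu‖²` and `B = ‖∂ₓv‖²` on `[0,1]`. Differentiating in time, exchanging
`∂ₜ∂ₓ = ∂ₓ∂ₜ` and integrating by parts (`∂ₜu` vanishes at the ends) turns `A'/2` into
`-∫ ∂ₓ²u · ∂ₜu`; inserting the equation `∂ₜu = ∂ₓ²u - g` and Young's inequality give
`A' ≤ -‖∂ₓ²u‖² + ‖g‖²`. The inequalities `‖∂ₓu‖ ≤ ‖∂ₓ²u‖` and `sup u² ≤ A` then give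
`A' ≤ -A + 3A² + 6a²AB`, and likewise for `B`, so `J = (A + B)/2` satisfies
`J' ≤ -J + C J²` with `C = 6 + 3(|a| + |b|)²`, while `C J₊ ≤ 1`. Starting below `1/C`,
`J` cannot cross a level `r` with `J 0 < r < 1/C`, and below that level
`J' ≤ -(1 - C r) J`, so `J` decays exponentially.
-/

open Set Filter Topology intervalIntegral
open MeasureTheory (volume)
open scoped ContDiff Interval

namespace CoupledBurgers

section UnitInterval

variable {w w' w'' : ℝ → ℝ}

theorem integral_mul_deriv_eq_neg_integral_deriv_mul {u u' v v' : ℝ → ℝ}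
    (hu : ContinuousOn u (Icc 0 1)) (hv : ContinuousOn v (Icc 0 1))
    (hu' : ContinuousOn u' (Icc 0 1)) (hv' : ContinuousOn v' (Icc 0 1))
    (huu' : ∀ x ∈ Ioo (0:ℝ) 1, HasDerivAt u (u' x) x)
    (hvv' : ∀ x ∈ Ioo (0:ℝ) 1, HasDerivAt v (v' x) x)
    (h0 : u 0 * v 0 = 0) (h1 : u 1 * v 1 = 0) :
    ∫ x in (0:ℝ)..1, u x * v' x = -∫ x in (0:ℝ)..1, u' x * v x := by
  rw [integral_mul_deriv_eq_deriv_mul_of_hasDerivAt (u := u) (v := v)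
    (by rwa [uIcc_of_le zero_le_one]) (by rwa [uIcc_of_le zero_le_one])
    (by simpa using huu') (by simpa using hvv')
    (hu'.intervalIntegrable_of_Icc zero_le_one) (hv'.intervalIntegrable_of_Icc zero_le_one),
    h0, h1, sub_zero, zero_sub]

theorem sq_integral_abs_le_integral_sq {g : ℝ → ℝ} (hg : ContinuousOn g (Icc 0 1)) :
    (∫ x in (0:ℝ)..1, |g x|) ^ 2 ≤ ∫ x in (0:ℝ)..1, g x ^ 2 := by
  set m := ∫ x in (0:ℝ)..1, |g x|
  have habs := hg.abs.intervalIntegrable_of_Icc (μ := volume) zero_le_one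
  have hsq : IntervalIntegrable (fun x => g x ^ 2) volume 0 1 :=
    (hg.pow 2).intervalIntegrable_of_Icc zero_le_one
  -- the variance of `|g|` is nonnegative
  have hvar : 0 ≤ ∫ x in (0:ℝ)..1, (|g x| - m) ^ 2 :=
    integral_nonneg zero_le_one fun x _ => sq_nonneg _
  have hexpand : ∫ x in (0:ℝ)..1, (|g x| - m) ^ 2 = (∫ x in (0:ℝ)..1, g x ^ 2) - m ^ 2 := by
    have h : ∀ x, (|g x| - m) ^ 2 = (g x ^ 2 - 2 * m * |g x|) + m ^ 2 := fun x => by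
      rw [sub_sq, sq_abs]; ring
    simp_rw [h]
    rw [integral_add (hsq.sub (habs.const_mul _)) intervalIntegrable_const,
      integral_sub hsq (habs.const_mul _), integral_const_mul]
    simp only [integral_const, sub_zero, smul_eq_mul, one_mul]
    ring
  linarith

theorem sq_le_integral_deriv_sq (hw : ContinuousOn w (Icc 0 1))
    (hw' : ContinuousOn w' (Icc 0 1)) (hd : ∀ x ∈ Ioo (0:ℝ) 1, HasDerivAt w (w' x) x)
    (h0 : w 0 = 0) {x : ℝ} (hx : x ∈ Icc (0:ℝ) 1) :
    w x ^ 2 ≤ ∫ y in (0:ℝ)..1, w' y ^ 2 := by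
  have hsub : Icc 0 x ⊆ Icc (0:ℝ) 1 := Icc_subset_Icc_right hx.2
  have hftc : ∫ y in (0:ℝ)..x, w' y = w x := by
    rw [integral_eq_sub_of_hasDeriv_right_of_le hx.1 (hw.mono hsub)
      (fun y hy => (hd y ⟨hy.1, hy.2.trans_le hx.2⟩).hasDerivWithinAt)
      ((hw'.mono hsub).intervalIntegrable_of_Icc hx.1), h0, sub_zero]
  have habs : |w x| ≤ ∫ y in (0:ℝ)..1, |w' y| := by
    calc |w x| = |∫ y in (0:ℝ)..x, w' y| := by rw [hftc]
      _ ≤ ∫ y in (0:ℝ)..x, |w' y| := abs_integral_le_integral_abs hx.1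
      _ ≤ ∫ y in (0:ℝ)..1, |w' y| :=
        integral_mono_interval le_rfl hx.1 hx.2 (Eventually.of_forall fun _ => abs_nonneg _)
          (hw'.abs.intervalIntegrable_of_Icc zero_le_one)
  calc w x ^ 2 = |w x| ^ 2 := (sq_abs _).symm
    _ ≤ (∫ y in (0:ℝ)..1, |w' y|) ^ 2 := pow_le_pow_left₀ (abs_nonneg _) habs 2
    _ ≤ ∫ y in (0:ℝ)..1, w' y ^ 2 := sq_integral_abs_le_integral_sq hw'

theorem integral_deriv_sq_le_integral_deriv2_sq (hw : ContinuousOn w (Icc 0 1))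
    (hw' : ContinuousOn w' (Icc 0 1)) (hw'' : ContinuousOn w'' (Icc 0 1))
    (hd : ∀ x ∈ Ioo (0:ℝ) 1, HasDerivAt w (w' x) x)
    (hd' : ∀ x ∈ Ioo (0:ℝ) 1, HasDerivAt w' (w'' x) x) (h0 : w 0 = 0) (h1 : w 1 = 0) :
    ∫ x in (0:ℝ)..1, w' x ^ 2 ≤ ∫ x in (0:ℝ)..1, w'' x ^ 2 := by
  have hint : ∀ {f : ℝ → ℝ}, ContinuousOn f (Icc 0 1) → IntervalIntegrable f volume 0 1 :=
    fun hf => hf.intervalIntegrable_of_Icc zero_le_one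
  have hparts : ∫ x in (0:ℝ)..1, w x * w'' x = -∫ x in (0:ℝ)..1, w' x ^ 2 := by
    simpa only [sq] using
      integral_mul_deriv_eq_neg_integral_deriv_mul hw hw' hw' hw'' hd hd' (by simp [h0])
        (by simp [h1])
  have hpoincare : ∫ x in (0:ℝ)..1, w x ^ 2 ≤ ∫ x in (0:ℝ)..1, w' x ^ 2 := by
    simpa using integral_mono_on zero_le_one (hint (hw.pow 2)) intervalIntegrable_const
      fun x hx => sq_le_integral_deriv_sq hw hw' hd h0 hx
  have hyoung : -∫ x in (0:ℝ)..1, w x * w'' x ≤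
      (∫ x in (0:ℝ)..1, w x ^ 2) / 2 + (∫ x in (0:ℝ)..1, w'' x ^ 2) / 2 := by
    rw [← integral_neg, ← integral_div, ← integral_div, ← integral_add]
    · exact integral_mono_on zero_le_one (hint (hw.mul hw'').neg)
        (hint ((hw.pow 2).div_const 2 |>.add ((hw''.pow 2).div_const 2)))
        fun x _ => by nlinarith [sq_nonneg (w x + w'' x)]
    · exact hint ((hw.pow 2).div_const 2)
    · exact hint ((hw''.pow 2).div_const 2)
  linarith

theorem integral_deriv_mul_deriv_le {τ τ' g : ℝ → ℝ} (hw : ContinuousOn w (Icc 0 1))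
    (hw' : ContinuousOn w' (Icc 0 1)) (hw'' : ContinuousOn w'' (Icc 0 1))
    (hτ : ContinuousOn τ (Icc 0 1)) (hτ' : ContinuousOn τ' (Icc 0 1))
    (hg : ContinuousOn g (Icc 0 1))
    (hd : ∀ x ∈ Ioo (0:ℝ) 1, HasDerivAt w (w' x) x)
    (hd' : ∀ x ∈ Ioo (0:ℝ) 1, HasDerivAt w' (w'' x) x)
    (hτd : ∀ x ∈ Ioo (0:ℝ) 1, HasDerivAt τ (τ' x) x)
    (hw0 : w 0 = 0) (hw1 : w 1 = 0) (hτ0 : τ 0 = 0) (hτ1 : τ 1 = 0)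
    (heq : ∀ x ∈ Ioo (0:ℝ) 1, τ x = w'' x - g x) :
    ∫ x in (0:ℝ)..1, w' x * τ' x ≤
      -(∫ x in (0:ℝ)..1, w' x ^ 2) / 2 + (∫ x in (0:ℝ)..1, g x ^ 2) / 2 := by
  have hint : ∀ {f : ℝ → ℝ}, ContinuousOn f (Icc 0 1) → IntervalIntegrable f volume 0 1 :=
    fun hf => hf.intervalIntegrable_of_Icc zero_le_one
  have hparts : ∫ x in (0:ℝ)..1, w' x * τ' x = -∫ x in (0:ℝ)..1, w'' x * τ x :=
    integral_mul_deriv_eq_neg_integral_deriv_mul hw' hτ hw'' hτ' hd' hτd (by simp [hτ0])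
      (by simp [hτ1])
  have hyoung : (∫ x in (0:ℝ)..1, w'' x ^ 2) / 2 - (∫ x in (0:ℝ)..1, g x ^ 2) / 2 ≤
      ∫ x in (0:ℝ)..1, w'' x * τ x := by
    rw [← integral_div, ← integral_div, ← integral_sub (f := fun x => w'' x ^ 2 / 2)
      (g := fun x => g x ^ 2 / 2) (hint ((hw''.pow 2).div_const 2)) (hint ((hg.pow 2).div_const 2))]
    refine integral_mono_on_of_le_Ioo zero_le_one
      (hint (((hw''.pow 2).div_const 2).sub ((hg.pow 2).div_const 2))) (hint (hw''.mul hτ))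
      fun x hx => ?_
    rw [heq x hx]
    nlinarith [sq_nonneg (w'' x - g x)]
  linarith [integral_deriv_sq_le_integral_deriv2_sq hw hw' hw'' hd hd' hw0 hw1]

end UnitInterval

section DifferentialInequality

variable {f f' : ℝ → ℝ}

theorem le_of_deriv_neg_at_level {r : ℝ} (hcont : ContinuousOn f (Ici 0))
    (hder : ∀ t > 0, HasDerivAt f (f' t) t) (hbarrier : ∀ t > 0, f t = r → f' t < 0)
    (h0 : f 0 < r) {t : ℝ} (ht : 0 ≤ t) : f t ≤ r := by
  obtain ⟨δ, hδ, hδr⟩ : ∃ δ ∈ Ioi (0:ℝ), Ico 0 δ ⊆ {s | f s < r} :=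
    mem_nhdsGE_iff_exists_Ico_subset.1 ((hcont 0 self_mem_Ici).eventually (gt_mem_nhds h0))
  rcases lt_or_ge t δ with htδ | htδ
  · exact (hδr ⟨ht, htδ⟩).le
  -- `f` has no derivative at `0`, so compare with the constant `r` on `[δ/2, t]` only
  have hδ2 : 0 < δ / 2 := half_pos hδ
  refine image_le_of_deriv_right_lt_deriv_boundary (B' := 0) (hcont.mono ?_)
    (fun s hs => (hder s (hδ2.trans_le hs.1)).hasDerivWithinAt)
    (hδr ⟨hδ2.le, half_lt_self hδ⟩).le (fun _ => hasDerivAt_const _ r)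
    (fun s hs => hbarrier s (hδ2.trans_le hs.1)) ⟨by linarith, le_rfl⟩
  exact fun s hs => hδ2.le.trans hs.1

theorem le_mul_exp_of_deriv_le {ε : ℝ} (hcont : ContinuousOn f (Ici 0))
    (hder : ∀ t > 0, HasDerivAt f (f' t) t) (hdecay : ∀ t > 0, f' t ≤ -ε * f t)
    {t : ℝ} (ht : 0 ≤ t) : f t ≤ f 0 * Real.exp (-(ε * t)) := by
  have hanti : AntitoneOn (fun s => f s * Real.exp (ε * s)) (Ici 0) := by
    have hderiv : ∀ s > 0, HasDerivAt (fun s => f s * Real.exp (ε * s))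
        ((f' s + ε * f s) * Real.exp (ε * s)) s := fun s hs =>
      ((hder s hs).mul ((hasDerivAt_id' s).const_mul ε).exp).congr_deriv (by ring)
    refine antitoneOn_of_deriv_nonpos (convex_Ici 0) (hcont.mul (by fun_prop)) ?_ ?_ <;>
      rw [interior_Ici] <;> intro s hs
    · exact (hderiv s hs).differentiableAt.differentiableWithinAt
    · rw [(hderiv s hs).deriv]
      exact mul_nonpos_of_nonpos_of_nonneg (by linarith [hdecay s hs]) (Real.exp_pos _).le
  have := hanti self_mem_Ici ht ht
  simp only [mul_zero, Real.exp_zero, mul_one] at this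
  rw [Real.exp_neg, ← div_eq_mul_inv, le_div_iff₀ (Real.exp_pos _)]
  exact this

theorem tendsto_zero_of_deriv_le_neg_add_sq {C : ℝ} (hC : 0 ≤ C)
    (hcont : ContinuousOn f (Ici 0)) (hder : ∀ t > 0, HasDerivAt f (f' t) t)
    (hnonneg : ∀ t ≥ 0, 0 ≤ f t) (hineq : ∀ t > 0, f' t ≤ -f t + C * f t ^ 2)
    (h0 : C * f 0 < 1) : Tendsto f atTop (𝓝 0) := by
  obtain ⟨r, hr0, hCr⟩ : ∃ r, f 0 < r ∧ C * r < 1 :=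
    ((continuous_const_mul C).tendsto (f 0)).eventually (gt_mem_nhds h0) |>.exists_gt
  have hr : 0 < r := (hnonneg 0 le_rfl).trans_lt hr0
  have hle : ∀ t ≥ 0, f t ≤ r := fun t ht =>
    le_of_deriv_neg_at_level hcont hder
      (fun s hs hfs => by nlinarith [hfs ▸ hineq s hs, mul_pos hr (sub_pos.2 hCr)]) hr0 ht
  -- below the level `r`, `C f² ≤ C r f`
  have hdecay : ∀ t > 0, f' t ≤ -(1 - C * r) * f t := fun t ht => by
    nlinarith [hineq t ht,
      mul_nonneg (mul_nonneg hC (hnonneg t ht.le)) (sub_nonneg.2 (hle t ht.le))]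
  have hexp : Tendsto (fun t => f 0 * Real.exp (-((1 - C * r) * t))) atTop (𝓝 0) := by
    simpa using (Real.tendsto_exp_neg_atTop_nhds_zero.comp
      (tendsto_id.const_mul_atTop (sub_pos.2 hCr))).const_mul (f 0)
  refine tendsto_of_tendsto_of_tendsto_of_le_of_le' tendsto_const_nhds hexp ?_ ?_ <;>
    filter_upwards [eventually_ge_atTop 0] with t ht
  · exact hnonneg t ht
  · exact le_mul_exp_of_deriv_le hcont hder hdecay ht

end DifferentialInequality

/-- Derivatives are taken within the closed strip `[0,∞) × [0,1]`, so that they are defined and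
smooth up to its boundary. -/
def strip : Set (ℝ × ℝ) := Ici 0 ×ˢ Icc 0 1

noncomputable def pderiv (v : ℝ × ℝ) (f : ℝ × ℝ → ℝ) (p : ℝ × ℝ) : ℝ :=
  fderivWithin ℝ f strip p v

noncomputable abbrev dt : (ℝ × ℝ → ℝ) → ℝ × ℝ → ℝ := pderiv (1, 0)

noncomputable abbrev dx : (ℝ × ℝ → ℝ) → ℝ × ℝ → ℝ := pderiv (0, 1)

section Strip

variable {f : ℝ × ℝ → ℝ} {t x : ℝ}

theorem mem_strip (ht : 0 ≤ t) (hx : x ∈ Icc (0:ℝ) 1) : (t, x) ∈ strip := ⟨ht, hx⟩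

theorem interior_strip : interior strip = Ioi 0 ×ˢ Ioo 0 1 := by
  rw [strip, interior_prod_eq, interior_Ici, interior_Icc]

theorem strip_subset_closure_interior : strip ⊆ closure (interior strip) := by
  rw [interior_strip, closure_prod_eq, closure_Ioi, closure_Ioo zero_ne_one]
  rfl

theorem uniqueDiffOn_strip : UniqueDiffOn ℝ strip :=
  uniqueDiffOn_convex ((convex_Ici 0).prod (convex_Icc 0 1))
    (by rw [interior_strip]; exact ⟨(1, 1 / 2), by norm_num, by norm_num, by norm_num⟩)

theorem contDiffOn_pderiv (hf : ContDiffOn ℝ ∞ f strip) (v : ℝ × ℝ) :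
    ContDiffOn ℝ ∞ (pderiv v f) strip :=
  (ContinuousLinearMap.apply ℝ ℝ v).contDiff.comp_contDiffOn
    (hf.fderivWithin uniqueDiffOn_strip (by simp))

theorem pderiv_comm (hf : ContDiffOn ℝ ∞ f strip) {p : ℝ × ℝ} (hp : p ∈ strip)
    (v w : ℝ × ℝ) : pderiv v (pderiv w f) p = pderiv w (pderiv v f) p := by
  have hd : DifferentiableWithinAt ℝ (fderivWithin ℝ f strip) strip p :=
    ((hf.fderivWithin uniqueDiffOn_strip (m := ∞) (by simp)).differentiableOn (by simp)) p hp
  have happly : ∀ v w,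
      pderiv v (pderiv w f) p = fderivWithin ℝ (fderivWithin ℝ f strip) strip p v w := by
    intro v w
    show fderivWithin ℝ (fun q => fderivWithin ℝ f strip q w) strip p v = _
    rw [fderivWithin_clm_apply (uniqueDiffOn_strip p hp) hd (differentiableWithinAt_const w)]
    simp
  rw [happly, happly]
  exact (hf p hp).isSymmSndFDerivWithinAt
    (by rw [minSmoothness_of_isRCLikeNormedField]; exact WithTop.coe_le_coe.2 le_top)
    uniqueDiffOn_strip (strip_subset_closure_interior hp) hp v w

theorem continuousOn_slice {g : ℝ × ℝ → ℝ} (hg : ContinuousOn g strip) (ht : 0 ≤ t) :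
    ContinuousOn (fun x => g (t, x)) (Icc 0 1) :=
  hg.comp (by fun_prop) fun _ hx => mem_strip ht hx

theorem intervalIntegrable_slice {g : ℝ × ℝ → ℝ} (hg : ContinuousOn g strip)
    (ht : 0 ≤ t) :
    IntervalIntegrable (fun x => g (t, x)) volume 0 1 :=
  (continuousOn_slice hg ht).intervalIntegrable_of_Icc zero_le_one

theorem hasDerivAt_slice (hf : ContDiffOn ℝ ∞ f strip) (ht : 0 ≤ t)
    (hx : x ∈ Ioo (0:ℝ) 1) :
    HasDerivAt (fun y => f (t, y)) (dx f (t, x)) x := by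
  have hF : HasFDerivWithinAt f (fderivWithin ℝ f strip (t, x)) strip (t, x) :=
    (hf.differentiableOn (by simp) _ (mem_strip ht (Ioo_subset_Icc_self hx))).hasFDerivWithinAt
  exact (hF.comp_hasDerivWithinAt x
    ((hasDerivAt_const x t).prodMk (hasDerivAt_id x)).hasDerivWithinAt
    fun y hy => mem_strip ht hy).hasDerivAt (Icc_mem_nhds hx.1 hx.2)

theorem hasDerivAt_dt (hf : ContDiffOn ℝ ∞ f strip) (ht : 0 < t) (hx : x ∈ Icc (0:ℝ) 1) :
    HasDerivAt (fun s => f (s, x)) (dt f (t, x)) t := by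
  have hF : HasFDerivWithinAt f (fderivWithin ℝ f strip (t, x)) strip (t, x) :=
    (hf.differentiableOn (by simp) _ (mem_strip ht.le hx)).hasFDerivWithinAt
  exact (hF.comp_hasDerivWithinAt t
    ((hasDerivAt_id t).prodMk (hasDerivAt_const t x)).hasDerivWithinAt
    fun s hs => mem_strip hs hx).hasDerivAt (Ici_mem_nhds ht)

theorem dt_eq_zero_of_forall_eq_zero (hf : ContDiffOn ℝ ∞ f strip) (ht : 0 < t)
    (hx : x ∈ Icc (0:ℝ) 1) (hzero : ∀ s ≥ 0, f (s, x) = 0) : dt f (t, x) = 0 :=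
  (hasDerivAt_dt hf ht hx).unique <| (hasDerivAt_const t 0).congr_of_eventuallyEq <| by
    filter_upwards [Ioi_mem_nhds ht] with s hs using hzero s hs.le

theorem deriv_deriv_slice (hf : ContDiffOn ℝ ∞ f strip) (ht : 0 ≤ t)
    (hx : x ∈ Ioo (0:ℝ) 1) :
    deriv (deriv fun y => f (t, y)) x = dx (dx f) (t, x) := by
  have hev : deriv (fun y => f (t, y)) =ᶠ[𝓝 x] fun y => dx f (t, y) := by
    filter_upwards [Ioo_mem_nhds hx.1 hx.2] with y hy using (hasDerivAt_slice hf ht hy).deriv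
  rw [hev.deriv_eq, (hasDerivAt_slice (contDiffOn_pderiv hf _) ht hx).deriv]

end Strip

noncomputable def energy (f : ℝ × ℝ → ℝ) (t : ℝ) : ℝ :=
  ∫ x in (0:ℝ)..1, dx f (t, x) ^ 2

section Energy

variable {f : ℝ × ℝ → ℝ} {t : ℝ}

theorem energy_nonneg (f : ℝ × ℝ → ℝ) (t : ℝ) : 0 ≤ energy f t :=
  integral_nonneg zero_le_one fun _ _ => sq_nonneg _

theorem integral_deriv_slice_sq (hf : ContDiffOn ℝ ∞ f strip) (ht : 0 ≤ t) :
    ∫ x in (0:ℝ)..1, deriv (fun y => f (t, y)) x ^ 2 = energy f t :=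
  integral_congr_uIoo fun x hx => by
    rw [uIoo_of_le zero_le_one] at hx
    simp only [(hasDerivAt_slice hf ht hx).deriv]

theorem continuousOn_energy (hf : ContDiffOn ℝ ∞ f strip) :
    ContinuousOn (energy f) (Ici 0) := by
  -- clamp `x` to `[0,1]` to get an integrand that is continuous on all of `Ici 0 × ℝ`
  have hF : Continuous (Function.uncurry
      fun (s : Ici (0:ℝ)) (y : ℝ) => dx f (s, projIcc 0 1 zero_le_one y) ^ 2) :=
    ((contDiffOn_pderiv hf _).continuousOn.comp_continuous (by fun_prop)
      fun (q : Ici (0:ℝ) × ℝ) => mem_strip q.1.2 (projIcc 0 1 zero_le_one q.2).2).pow 2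
  rw [continuousOn_iff_continuous_domRestrict]
  refine (continuous_parametric_intervalIntegral_of_continuous' hF 0 1).congr fun s =>
    integral_congr fun y hy => ?_
  rw [uIcc_of_le zero_le_one] at hy
  simp [projIcc_of_mem zero_le_one hy]

theorem hasDerivAt_energy (hf : ContDiffOn ℝ ∞ f strip) (ht : 0 < t) :
    HasDerivAt (energy f) (2 * ∫ x in (0:ℝ)..1, dx f (t, x) * dx (dt f) (t, x)) t := by
  have hdx := (contDiffOn_pderiv hf (0, 1)).continuousOn
  have hdtdx := (contDiffOn_pderiv (contDiffOn_pderiv hf (0, 1)) (1, 0)).continuousOn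
  have hF' : ContinuousOn (fun p => 2 * dx f p * dt (dx f) p) strip := by fun_prop
  have hK : Icc (t / 2) (2 * t) ×ˢ Icc (0:ℝ) 1 ⊆ strip :=
    prod_mono (fun s hs => (half_pos ht).le.trans hs.1) le_rfl
  obtain ⟨C, hC⟩ :=
    (isCompact_Icc.prod isCompact_Icc).exists_bound_of_continuousOn (hF'.mono hK)
  have hmeas : ∀ {s}, 0 ≤ s → ∀ {g : ℝ × ℝ → ℝ}, ContinuousOn g strip →
      MeasureTheory.AEStronglyMeasurable (fun x => g (s, x)) (volume.restrict (Ι 0 1)) :=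
    fun hs _ hg => (intervalIntegrable_slice hg hs).def'.aestronglyMeasurable
  have hIoc : Ι (0:ℝ) 1 = Ioc 0 1 := uIoc_of_le zero_le_one
  obtain ⟨-, hderiv⟩ := hasDerivAt_integral_of_dominated_loc_of_deriv_le
    (F := fun s x => dx f (s, x) ^ 2) (F' := fun s x => 2 * dx f (s, x) * dt (dx f) (s, x))
    (bound := fun _ => C) (Ioo_mem_nhds (half_lt_self ht) (by linarith))
    (eventually_of_mem (Ioi_mem_nhds ht) fun s hs => hmeas (le_of_lt hs) (hdx.pow 2))
    (intervalIntegrable_slice (hdx.pow 2) ht.le) (hmeas ht.le hF')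
    (.of_forall fun x hx s hs =>
      hC _ ⟨Ioo_subset_Icc_self hs, Ioc_subset_Icc_self (hIoc ▸ hx)⟩)
    intervalIntegrable_const
    (.of_forall fun x hx s hs =>
      ((hasDerivAt_dt (contDiffOn_pderiv hf _) ((half_pos ht).trans hs.1)
        (Ioc_subset_Icc_self (hIoc ▸ hx))).pow 2).congr_deriv (by ring))
  rw [← integral_const_mul]
  refine hderiv.congr_deriv (integral_congr fun x hx => ?_)
  rw [uIcc_of_le zero_le_one] at hx
  simp only [pderiv_comm hf (mem_strip ht.le hx)]
  ring

theorem integral_dx_mul_dx_dt_le (hf : ContDiffOn ℝ ∞ f strip) (ht : 0 < t)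
    (hbc : ∀ s ≥ 0, f (s, 0) = 0 ∧ f (s, 1) = 0) {g : ℝ → ℝ} (hg : ContinuousOn g (Icc 0 1))
    (heq : ∀ x ∈ Ioo (0:ℝ) 1, dt f (t, x) = dx (dx f) (t, x) - g x) :
    ∫ x in (0:ℝ)..1, dx f (t, x) * dx (dt f) (t, x) ≤
      -energy f t / 2 + (∫ x in (0:ℝ)..1, g x ^ 2) / 2 := by
  have hdx := contDiffOn_pderiv hf (0, 1)
  have hdt := contDiffOn_pderiv hf (1, 0)
  have hdxdx := contDiffOn_pderiv hdx (0, 1)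
  exact integral_deriv_mul_deriv_le (continuousOn_slice hf.continuousOn ht.le)
    (continuousOn_slice hdx.continuousOn ht.le) (continuousOn_slice hdxdx.continuousOn ht.le)
    (continuousOn_slice hdt.continuousOn ht.le)
    (continuousOn_slice (contDiffOn_pderiv hdt (0, 1)).continuousOn ht.le) hg
    (fun x hx => hasDerivAt_slice hf ht.le hx) (fun x hx => hasDerivAt_slice hdx ht.le hx)
    (fun x hx => hasDerivAt_slice hdt ht.le hx) (hbc t ht.le).1 (hbc t ht.le).2
    (dt_eq_zero_of_forall_eq_zero hf ht (left_mem_Icc.2 zero_le_one) fun s hs => (hbc s hs).1)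
    (dt_eq_zero_of_forall_eq_zero hf ht (right_mem_Icc.2 zero_le_one) fun s hs => (hbc s hs).2)
    heq

end Energy

/-- The nonlinear term `f ∂ₓf + a ∂ₓ(f z)` of the equation for `f` coupled to `z`. -/
noncomputable def burgersTerm (a : ℝ) (f z : ℝ × ℝ → ℝ) (p : ℝ × ℝ) : ℝ :=
  f p * dx f p + a * (dx f p * z p + f p * dx z p)

section Burgers

variable {f z : ℝ × ℝ → ℝ} {t : ℝ}

theorem continuousOn_burgersTerm (a : ℝ) (hf : ContDiffOn ℝ ∞ f strip)
    (hz : ContDiffOn ℝ ∞ z strip) : ContinuousOn (burgersTerm a f z) strip := by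
  have := hf.continuousOn; have := hz.continuousOn
  have := (contDiffOn_pderiv hf (0, 1)).continuousOn
  have := (contDiffOn_pderiv hz (0, 1)).continuousOn
  unfold burgersTerm
  fun_prop

theorem dt_eq_of_burgers (a : ℝ) (hf : ContDiffOn ℝ ∞ f strip)
    (hz : ContDiffOn ℝ ∞ z strip) (ht : 0 < t) {x : ℝ} (hx : x ∈ Ioo (0:ℝ) 1)
    (hpde : deriv (fun s => f (s, x)) t = deriv (deriv fun y => f (t, y)) x
      - f (t, x) * deriv (fun y => f (t, y)) x - a * deriv (fun y => f (t, y) * z (t, y)) x) :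
    dt f (t, x) = dx (dx f) (t, x) - burgersTerm a f z (t, x) := by
  rw [(hasDerivAt_dt hf ht (Ioo_subset_Icc_self hx)).deriv, deriv_deriv_slice hf ht.le hx,
    (hasDerivAt_slice hf ht.le hx).deriv,
    ((hasDerivAt_slice hf ht.le hx).fun_mul (hasDerivAt_slice hz ht.le hx)).deriv] at hpde
  rw [hpde, burgersTerm]
  ring

theorem sq_burgersTerm_le {a w p y q A B : ℝ} (hw : w ^ 2 ≤ A) (hy : y ^ 2 ≤ B) :
    (w * p + a * (p * y + w * q)) ^ 2 ≤ 3 * (A + a ^ 2 * B) * p ^ 2 + 3 * a ^ 2 * A * q ^ 2 := by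
  have h1 : (w * p) ^ 2 ≤ A * p ^ 2 := by
    rw [mul_pow]; exact mul_le_mul_of_nonneg_right hw (sq_nonneg p)
  have h2 : (a * (p * y)) ^ 2 ≤ a ^ 2 * B * p ^ 2 := by
    rw [show (a * (p * y)) ^ 2 = a ^ 2 * p ^ 2 * y ^ 2 by ring]
    nlinarith [mul_le_mul_of_nonneg_left hy (mul_nonneg (sq_nonneg a) (sq_nonneg p))]
  have h3 : (a * (w * q)) ^ 2 ≤ a ^ 2 * A * q ^ 2 := by
    rw [show (a * (w * q)) ^ 2 = a ^ 2 * q ^ 2 * w ^ 2 by ring]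
    nlinarith [mul_le_mul_of_nonneg_left hw (mul_nonneg (sq_nonneg a) (sq_nonneg q))]
  nlinarith [sq_nonneg (w * p - a * (p * y)), sq_nonneg (w * p - a * (w * q)),
    sq_nonneg (a * (p * y) - a * (w * q))]

/-- The `H¹₀` energy controls `sup |f(t,·)|²`, which bounds the nonlinear term. -/
theorem integral_burgersTerm_sq_le (a : ℝ) (hf : ContDiffOn ℝ ∞ f strip)
    (hz : ContDiffOn ℝ ∞ z strip) (ht : 0 ≤ t) (hf0 : f (t, 0) = 0) (hz0 : z (t, 0) = 0) :
    ∫ x in (0:ℝ)..1, burgersTerm a f z (t, x) ^ 2 ≤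
      3 * energy f t ^ 2 + 6 * a ^ 2 * (energy f t * energy z t) := by
  have hdf := (contDiffOn_pderiv hf (0, 1)).continuousOn
  have hdz := (contDiffOn_pderiv hz (0, 1)).continuousOn
  have hsup : ∀ {w : ℝ × ℝ → ℝ}, ContDiffOn ℝ ∞ w strip → w (t, 0) = 0 →
      ∀ x ∈ Icc (0:ℝ) 1, w (t, x) ^ 2 ≤ energy w t := fun hw hw0 x hx =>
    sq_le_integral_deriv_sq (continuousOn_slice hw.continuousOn ht)
      (continuousOn_slice (contDiffOn_pderiv hw _).continuousOn ht)
      (fun y hy => hasDerivAt_slice hw ht hy) hw0 hx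
  set A := energy f t
  set B := energy z t
  have hIf : IntervalIntegrable (fun x => 3 * (A + a ^ 2 * B) * dx f (t, x) ^ 2) volume 0 1 :=
    intervalIntegrable_slice (g := fun p => 3 * (A + a ^ 2 * B) * dx f p ^ 2) (by fun_prop) ht
  have hIz : IntervalIntegrable (fun x => 3 * a ^ 2 * A * dx z (t, x) ^ 2) volume 0 1 :=
    intervalIntegrable_slice (g := fun p => 3 * a ^ 2 * A * dx z p ^ 2) (by fun_prop) ht
  calc ∫ x in (0:ℝ)..1, burgersTerm a f z (t, x) ^ 2
      ≤ ∫ x in (0:ℝ)..1,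
          (3 * (A + a ^ 2 * B) * dx f (t, x) ^ 2 + 3 * a ^ 2 * A * dx z (t, x) ^ 2) :=
        integral_mono_on zero_le_one
          (intervalIntegrable_slice ((continuousOn_burgersTerm a hf hz).pow 2) ht)
          (hIf.add hIz)
          fun x hx => sq_burgersTerm_le (hsup hf hf0 x hx) (hsup hz hz0 x hx)
    _ = 3 * (A + a ^ 2 * B) * A + 3 * a ^ 2 * A * B := by
        rw [integral_add hIf hIz, integral_const_mul, integral_const_mul]
        rfl
    _ = 3 * A ^ 2 + 6 * a ^ 2 * (A * B) := by ring

theorem burgers_energy_deriv_le (a : ℝ) (hf : ContDiffOn ℝ ∞ f strip)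
    (hz : ContDiffOn ℝ ∞ z strip) (ht : 0 < t)
    (hbc : ∀ s ≥ 0, f (s, 0) = 0 ∧ f (s, 1) = 0) (hz0 : z (t, 0) = 0)
    (hpde : ∀ x ∈ Ioo (0:ℝ) 1, deriv (fun s => f (s, x)) t = deriv (deriv fun y => f (t, y)) x
      - f (t, x) * deriv (fun y => f (t, y)) x - a * deriv (fun y => f (t, y) * z (t, y)) x) :
    2 * ∫ x in (0:ℝ)..1, dx f (t, x) * dx (dt f) (t, x) ≤
      -energy f t + 3 * energy f t ^ 2 + 6 * a ^ 2 * (energy f t * energy z t) := by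
  have hheat := integral_dx_mul_dx_dt_le hf ht hbc
    (continuousOn_slice (continuousOn_burgersTerm a hf hz) ht.le)
    fun x hx => dt_eq_of_burgers a hf hz ht hx (hpde x hx)
  linarith [integral_burgersTerm_sq_le a hf hz ht.le (hbc t ht.le).1 hz0]

end Burgers

theorem coupled_energy_inequality {a b A B I₁ I₂ : ℝ} (hA : 0 ≤ A) (hB : 0 ≤ B)
    (h₁ : I₁ ≤ -A + 3 * A ^ 2 + 6 * a ^ 2 * (A * B))
    (h₂ : I₂ ≤ -B + 3 * B ^ 2 + 6 * b ^ 2 * (B * A)) :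
    (I₁ + I₂) / 2 ≤ -((A + B) / 2) + (6 + 3 * (|a| + |b|) ^ 2) * ((A + B) / 2) ^ 2 := by
  have hab : a ^ 2 + b ^ 2 ≤ (|a| + |b|) ^ 2 := by
    nlinarith [sq_abs a, sq_abs b, abs_nonneg a, abs_nonneg b]
  nlinarith [mul_le_mul_of_nonneg_right hab (mul_nonneg hA hB),
    mul_nonneg (sq_nonneg (|a| + |b|)) (sq_nonneg (A - B))]

theorem threshold_mul_le_one {K : ℝ} (hK : 0 < K) :
    (6 + 3 * K ^ 2) * ((-20 + √(400 + 36000 * K ^ 4)) / (36000 * K ^ 4)) ≤ 1 := by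
  set c := 36000 * K ^ 4
  set s := √(400 + c)
  have hc : 0 < c := by positivity
  have hs : s ^ 2 = 400 + c := Real.sq_sqrt (by positivity)
  have hs20 : 20 ≤ s := Real.le_sqrt_of_sq_le (by linarith)
  -- `(s - 20) / c = 1 / (s + 20)`, and `s ≥ 3K²` since `c ≥ 9K⁴`
  have h3K : 3 * K ^ 2 ≤ s := Real.le_sqrt_of_sq_le (by nlinarith [pow_pos hK 4])
  rw [mul_div_assoc', div_le_one hc]
  nlinarith [mul_le_mul_of_nonneg_right (show 6 + 3 * K ^ 2 ≤ s + 20 by linarith)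
    (sub_nonneg.2 hs20)]

end CoupledBurgers

open CoupledBurgers in
/-- For smooth solutions `u, v` of the coupled Burgers' equations on `[0,∞) × [0,1]`
with zero Dirichlet boundary conditions and `|a| + |b| > 0`: if the `H¹₀`-energy
`J t = ½(‖∂ₓu(t)‖² + ‖∂ₓv(t)‖²)` satisfies `J 0 < J₊`, where
`J₊ = (-20 + √(400 + c))/c` with `c = 36000(|a|+|b|)⁴` is the unique positive zero
of `f J = -J + 40J² + cJ³`, then `J t → 0` as `t → ∞`. -/
theorem coupled_burgers_energy_decay (a b : ℝ) (hab : 0 < |a| + |b|)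
    (c : ℝ) (hc : c = 36000 * (|a| + |b|) ^ 4)
    (Jplus : ℝ) (hJplus : Jplus = (-20 + Real.sqrt (400 + c)) / c)
    (u v : ℝ × ℝ → ℝ)
    (hu : ContDiffOn ℝ (⊤ : ℕ∞) u (Set.Ici (0:ℝ) ×ˢ Set.Icc (0:ℝ) 1))
    (hv : ContDiffOn ℝ (⊤ : ℕ∞) v (Set.Ici (0:ℝ) ×ˢ Set.Icc (0:ℝ) 1))
    (hequ : ∀ t ≥ (0:ℝ), ∀ x ∈ Set.Icc (0:ℝ) 1,
      deriv (fun s => u (s, x)) t =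
        deriv (deriv (fun y => u (t, y))) x - u (t, x) * deriv (fun y => u (t, y)) x
          - a * deriv (fun y => u (t, y) * v (t, y)) x)
    (heqv : ∀ t ≥ (0:ℝ), ∀ x ∈ Set.Icc (0:ℝ) 1,
      deriv (fun s => v (s, x)) t =
        deriv (deriv (fun y => v (t, y))) x - v (t, x) * deriv (fun y => v (t, y)) x
          - b * deriv (fun y => u (t, y) * v (t, y)) x)
    (hbc : ∀ t ≥ (0:ℝ), u (t, 0) = 0 ∧ u (t, 1) = 0 ∧ v (t, 0) = 0 ∧ v (t, 1) = 0)
    (J : ℝ → ℝ)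
    (hJ : ∀ t, J t = (1/2) * ((∫ x in (0:ℝ)..1, (deriv (fun y => u (t, y)) x) ^ 2)
        + ∫ x in (0:ℝ)..1, (deriv (fun y => v (t, y)) x) ^ 2))
    (h0 : J 0 < Jplus) :
    Filter.Tendsto J Filter.atTop (nhds 0) := by
  set E : ℝ → ℝ := fun t => (energy u t + energy v t) / 2
  have hJE : ∀ t ≥ 0, J t = E t := fun t ht => by
    rw [hJ, integral_deriv_slice_sq hu ht, integral_deriv_slice_sq hv ht]
    ring
  have hineq := fun t (ht : 0 < t) =>
    coupled_energy_inequality (energy_nonneg u t) (energy_nonneg v t)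
      (burgers_energy_deriv_le a hu hv ht (fun s hs => ⟨(hbc s hs).1, (hbc s hs).2.1⟩)
        (hbc t ht.le).2.2.1 fun x hx => hequ t ht.le x (Ioo_subset_Icc_self hx))
      (burgers_energy_deriv_le b hv hu ht (fun s hs => (hbc s hs).2.2) (hbc t ht.le).1
        fun x hx => by simpa only [mul_comm (u _)] using heqv t ht.le x (Ioo_subset_Icc_self hx))
  have hE0 : (6 + 3 * (|a| + |b|) ^ 2) * E 0 < 1 :=
    calc _ < (6 + 3 * (|a| + |b|) ^ 2) * Jplus := by
          gcongr
          exact hJE 0 le_rfl ▸ h0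
      _ ≤ 1 := by rw [hJplus, hc]; exact threshold_mul_le_one hab
  refine (tendsto_zero_of_deriv_le_neg_add_sq (by positivity)
    (((continuousOn_energy hu).add (continuousOn_energy hv)).div_const 2)
    (fun t ht => ((hasDerivAt_energy hu ht).add (hasDerivAt_energy hv ht)).div_const 2)
    (fun t _ => div_nonneg (add_nonneg (energy_nonneg u t) (energy_nonneg v t)) zero_le_two)
    hineq hE0).congr' ?_
  filter_upwards [eventually_ge_atTop 0] with t ht using (hJE t ht).symm
end
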